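/- arXiv:2412.00212 — 9 statements merged into one kernel-verified Lean document; each statement's English description precedes it below -/
import Mathlib

section
/- Every minimum-cost construction sequence is greedy: if x is a construction sequence for a finite simple graph G with ν(x) = ν_*(G), then for every edge e = uw of G and every vertex v ∉ {u,w}, either x⁻¹(v) < max{x⁻¹(u), x⁻¹(w)} or x⁻¹(v) > x⁻¹(e). -/
/-!
Suppose `x` has minimum cost but an edge `e = uw` is preceded by a vertex `v` placed after
`u` and `w`. Look at the element just before `e`. If it is a vertex (necessarily not an endpoint
of `e`), exchanging it with `e` gives a construction sequence that is strictly cheaper. If it is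
an edge, exchanging the two edges keeps the cost (one edge gains 2, the other loses 2) and moves
`e` one step closer to `v`, so we conclude by induction on the position of `e`.
-/

namespace ConsCost

variable {V : Type*} [Fintype V]

/-- The number of elements (vertices plus edges) of a graph. -/
noncomputable def numElts (G : SimpleGraph V) : ℕ :=
  Fintype.card V + Nat.card G.edgeSet

/-- `x` is a construction sequence for `G`: a bijective listing of the vertices and
edges of `G` in which every edge appears after both of its endpoints. -/
def IsCSeq (G : SimpleGraph V) (x : Fin (numElts G) ≃ V ⊕ G.edgeSet) : Prop :=
  ∀ (e : G.edgeSet), ∀ v ∈ (e : Sym2 V), x.symm (Sum.inl v) < x.symm (Sum.inr e)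

/-- The cost `ν(e,x) = (x⁻¹e − x⁻¹u) + (x⁻¹e − x⁻¹w)` of an edge `e = uw`
in the construction sequence `x`. -/
noncomputable def edgeCost (G : SimpleGraph V) (x : Fin (numElts G) ≃ V ⊕ G.edgeSet)
    (e : G.edgeSet) : ℕ :=
  2 * (x.symm (Sum.inr e) : ℕ) -
    Sym2.lift ⟨fun u w => ((x.symm (Sum.inl u) : ℕ) + (x.symm (Sum.inl w) : ℕ)),
      fun u w => by dsimp only; omega⟩ (e : Sym2 V)

/-- The cost `ν(x)` of a construction sequence: the sum of the costs of all edges. -/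
noncomputable def cost (G : SimpleGraph V) (x : Fin (numElts G) ≃ V ⊕ G.edgeSet) : ℕ :=
  ∑ᶠ e : G.edgeSet, edgeCost G x e

/-- The maximum construction cost `ν*(G)`. -/
noncomputable def maxCost (G : SimpleGraph V) : ℕ :=
  sSup {c | ∃ x, IsCSeq G x ∧ cost G x = c}

/-- The minimum construction cost `ν_*(G)`. -/
noncomputable def minCost (G : SimpleGraph V) : ℕ :=
  sInf {c | ∃ x, IsCSeq G x ∧ cost G x = c}

end ConsCost

namespace Equiv

variable {α β : Type*} [DecidableEq α] (x : α ≃ β) (i j : α)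

theorem symm_swap_trans_apply (z : β) :
    ((swap i j).trans x).symm z = swap i j (x.symm z) := by
  rw [symm_trans_apply, symm_swap]

theorem symm_swap_trans_apply_left : ((swap i j).trans x).symm (x i) = j := by
  rw [symm_swap_trans_apply, symm_apply_apply, swap_apply_left]

theorem symm_swap_trans_apply_right : ((swap i j).trans x).symm (x j) = i := by
  rw [symm_swap_trans_apply, symm_apply_apply, swap_apply_right]

variable {x i j} in
theorem symm_swap_trans_apply_of_ne {z : β} (hi : z ≠ x i) (hj : z ≠ x j) :
    ((swap i j).trans x).symm z = x.symm z := by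
  rw [symm_swap_trans_apply]
  exact swap_apply_of_ne_of_ne (fun h => hi (x.symm_apply_eq.mp h))
    (fun h => hj (x.symm_apply_eq.mp h))

end Equiv

section SwapOrder

variable {α : Type*} [LinearOrder α] {i j p q : α}

theorem swap_apply_le_of_ne_left (hij : i ≤ j) (hp : p ≠ i) : Equiv.swap i j p ≤ p := by
  rcases eq_or_ne p j with rfl | hpj
  · rwa [Equiv.swap_apply_right]
  · rw [Equiv.swap_apply_of_ne_of_ne hp hpj]

theorem le_swap_apply_of_ne_right (hij : i ≤ j) (hp : p ≠ j) : p ≤ Equiv.swap i j p := by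
  rcases eq_or_ne p i with rfl | hpi
  · rwa [Equiv.swap_apply_left]
  · rw [Equiv.swap_apply_of_ne_of_ne hpi hp]

theorem swap_lt_swap_of_covBy (hij : i ⋖ j) (hpq : p < q) (h : ¬(p = i ∧ q = j)) :
    Equiv.swap i j p < Equiv.swap i j q := by
  have hlt := hij.lt
  rcases eq_or_ne p i with rfl | hpi
  · have hqj : q ≠ j := fun hq => h ⟨rfl, hq⟩
    rw [Equiv.swap_apply_left, Equiv.swap_apply_of_ne_of_ne hpq.ne' hqj]
    exact (hij.ge_of_gt hpq).lt_of_ne hqj.symm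
  rcases eq_or_ne p j with rfl | hpj
  · rw [Equiv.swap_apply_right, Equiv.swap_apply_of_ne_of_ne (hlt.trans hpq).ne' hpq.ne']
    exact hlt.trans hpq
  rw [Equiv.swap_apply_of_ne_of_ne hpi hpj]
  rcases eq_or_ne q i with rfl | hqi
  · rw [Equiv.swap_apply_left]
    exact hpq.trans hlt
  rcases eq_or_ne q j with rfl | hqj
  · rw [Equiv.swap_apply_right]
    exact (hij.le_of_lt hpq).lt_of_ne hpi
  rwa [Equiv.swap_apply_of_ne_of_ne hqi hqj]

end SwapOrder

section Finsum

variable {α M : Type*} [Finite α] [AddCommMonoid M] {f g : α → M}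

theorem finsum_lt_finsum_of_finite [PartialOrder M] [IsOrderedCancelAddMonoid M]
    (hle : ∀ a, f a ≤ g a) (hlt : ∃ a, f a < g a) : ∑ᶠ a, f a < ∑ᶠ a, g a := by
  have := Fintype.ofFinite α
  rw [finsum_eq_sum_of_fintype, finsum_eq_sum_of_fintype]
  obtain ⟨a, ha⟩ := hlt
  exact Finset.sum_lt_sum (fun a _ => hle a) ⟨a, Finset.mem_univ a, ha⟩

theorem finsum_eq_finsum_of_pair {a b : α} (hab : a ≠ b) (hpair : f a + f b = g a + g b)
    (hrest : ∀ c, c ≠ a → c ≠ b → f c = g c) : ∑ᶠ c, f c = ∑ᶠ c, g c := by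
  classical
  have := Fintype.ofFinite α
  rw [finsum_eq_sum_of_fintype, finsum_eq_sum_of_fintype, ← Finset.sum_add_sum_compl {a, b} f,
    ← Finset.sum_add_sum_compl {a, b} g, Finset.sum_pair hab, Finset.sum_pair hab, hpair]
  refine congrArg _ (Finset.sum_congr rfl fun c hc => ?_)
  simp only [Finset.mem_compl, Finset.mem_insert, Finset.mem_singleton, not_or] at hc
  exact hrest c hc.1 hc.2

end Finsum

namespace ConsCost

variable {V : Type*} [Fintype V] {G : SimpleGraph V} {x x' : Fin (numElts G) ≃ V ⊕ G.edgeSet}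

theorem minCost_le (hx : IsCSeq G x) : minCost G ≤ cost G x :=
  Nat.sInf_le ⟨x, hx, rfl⟩

theorem exists_endpoints_edgeCost_eq (e : G.edgeSet) :
    ∃ u ∈ (e : Sym2 V), ∃ w ∈ (e : Sym2 V), ∀ x : Fin (numElts G) ≃ V ⊕ G.edgeSet,
      edgeCost G x e =
        2 * (x.symm (Sum.inr e) : ℕ) - (x.symm (Sum.inl u) + x.symm (Sum.inl w) : ℕ) := by
  obtain ⟨u, w, huw⟩ : ∃ u w, s(u, w) = (e : Sym2 V) :=
    (e : Sym2 V).inductionOn fun u w => ⟨u, w, rfl⟩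
  refine ⟨u, huw ▸ Sym2.mem_mk_left u w, w, huw ▸ Sym2.mem_mk_right u w, fun x => ?_⟩
  rw [edgeCost, ← huw, Sym2.lift_mk]

section EdgeCost

variable {e : G.edgeSet}

theorem edgeCost_le_edgeCost (he : x'.symm (Sum.inr e) ≤ x.symm (Sum.inr e))
    (hv : ∀ a ∈ (e : Sym2 V), x.symm (Sum.inl a) ≤ x'.symm (Sum.inl a)) :
    edgeCost G x' e ≤ edgeCost G x e := by
  obtain ⟨u, hu, w, hw, hcost⟩ := exists_endpoints_edgeCost_eq e
  have hu_le := Fin.le_def.mp (hv u hu)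
  have hw_le := Fin.le_def.mp (hv w hw)
  rw [hcost, hcost]
  rw [Fin.le_def] at he
  omega

theorem edgeCost_lt_edgeCost (hx' : IsCSeq G x')
    (he : x'.symm (Sum.inr e) < x.symm (Sum.inr e))
    (hv : ∀ a ∈ (e : Sym2 V), x.symm (Sum.inl a) ≤ x'.symm (Sum.inl a)) :
    edgeCost G x' e < edgeCost G x e := by
  obtain ⟨u, hu, w, hw, hcost⟩ := exists_endpoints_edgeCost_eq e
  have hu_lt := Fin.lt_def.mp (hx' e u hu)
  have hw_lt := Fin.lt_def.mp (hx' e w hw)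
  have hu_le := Fin.le_def.mp (hv u hu)
  have hw_le := Fin.le_def.mp (hv w hw)
  rw [hcost, hcost]
  rw [Fin.lt_def] at he
  omega

theorem edgeCost_eq_add (hx : IsCSeq G x) {d : ℕ}
    (he : (x'.symm (Sum.inr e) : ℕ) = x.symm (Sum.inr e) + d)
    (hv : ∀ a ∈ (e : Sym2 V), x'.symm (Sum.inl a) = x.symm (Sum.inl a)) :
    edgeCost G x' e = edgeCost G x e + 2 * d := by
  obtain ⟨u, hu, w, hw, hcost⟩ := exists_endpoints_edgeCost_eq e
  rw [hcost, hcost, hv u hu, hv w hw]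
  have hu_lt := Fin.lt_def.mp (hx e u hu)
  have hw_lt := Fin.lt_def.mp (hx e w hw)
  omega

end EdgeCost

section AdjacentSwap

variable {i j : Fin (numElts G)}

theorem IsCSeq.swap_trans (hx : IsCSeq G x) (hij : i ⋖ j)
    (hsep : ∀ e : G.edgeSet, x j = Sum.inr e → ∀ a ∈ (e : Sym2 V), x i ≠ Sum.inl a) :
    IsCSeq G ((Equiv.swap i j).trans x) := by
  intro e a ha
  rw [Equiv.symm_swap_trans_apply, Equiv.symm_swap_trans_apply]
  refine swap_lt_swap_of_covBy hij (hx e a ha) fun ⟨hai, hej⟩ => ?_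
  exact hsep e (x.symm_apply_eq.mp hej).symm a ha (x.symm_apply_eq.mp hai).symm

theorem exists_cost_lt_of_vertex_covBy_edge (hx : IsCSeq G x) (hij : i ⋖ j) {y : V}
    {e : G.edgeSet} (hy : x i = Sum.inl y) (he : x j = Sum.inr e) (hye : y ∉ (e : Sym2 V)) :
    ∃ x', IsCSeq G x' ∧ cost G x' < cost G x := by
  set x' := (Equiv.swap i j).trans x
  have hx' : IsCSeq G x' := by
    refine hx.swap_trans hij fun g hg a ha hya => hye ?_
    rw [he, Sum.inr_injective.eq_iff] at hg
    rw [hy, Sum.inl_injective.eq_iff] at hya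
    exact hya ▸ hg ▸ ha
  have vertex_le (a : V) : x.symm (Sum.inl a) ≤ x'.symm (Sum.inl a) := by
    rw [Equiv.symm_swap_trans_apply]
    exact le_swap_apply_of_ne_right hij.le fun h =>
      Sum.inl_ne_inr ((x.symm_apply_eq.mp h).trans he)
  have edge_le (g : G.edgeSet) : x'.symm (Sum.inr g) ≤ x.symm (Sum.inr g) := by
    rw [Equiv.symm_swap_trans_apply]
    exact swap_apply_le_of_ne_left hij.le fun h =>
      Sum.inr_ne_inl ((x.symm_apply_eq.mp h).trans hy)
  have he_lt : x'.symm (Sum.inr e) < x.symm (Sum.inr e) := by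
    rw [← he, Equiv.symm_swap_trans_apply_right, Equiv.symm_apply_apply]
    exact hij.lt
  refine ⟨x', hx', finsum_lt_finsum_of_finite ?_ ?_⟩
  · exact fun g => edgeCost_le_edgeCost (edge_le g) fun a _ => vertex_le a
  · exact ⟨e, edgeCost_lt_edgeCost hx' he_lt fun a _ => vertex_le a⟩

theorem symm_swap_trans_inl_of_inr {f e : G.edgeSet} (hf : x i = Sum.inr f)
    (he : x j = Sum.inr e) (a : V) :
    ((Equiv.swap i j).trans x).symm (Sum.inl a) = x.symm (Sum.inl a) :=
  Equiv.symm_swap_trans_apply_of_ne (hf ▸ Sum.inl_ne_inr) (he ▸ Sum.inl_ne_inr)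

theorem isCSeq_and_cost_swap_trans_of_edges (hx : IsCSeq G x) (hij : i ⋖ j) {f e : G.edgeSet}
    (hf : x i = Sum.inr f) (he : x j = Sum.inr e) :
    IsCSeq G ((Equiv.swap i j).trans x) ∧ cost G ((Equiv.swap i j).trans x) = cost G x := by
  set x' := (Equiv.swap i j).trans x
  have hx' : IsCSeq G x' := hx.swap_trans hij fun _ _ _ _ => hf ▸ Sum.inr_ne_inl
  have hij' : (i : ℕ) + 1 = j := Nat.covBy_iff_add_one_eq.mp (Fin.covBy_iff.mp hij)
  have hfe : f ≠ e := fun h => hij.lt.ne (x.injective (hf.trans (h ▸ he.symm)))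
  have vertex_eq := symm_swap_trans_inl_of_inr hf he
  have hfx' : x'.symm (Sum.inr f) = j := hf ▸ Equiv.symm_swap_trans_apply_left x i j
  have hex' : x'.symm (Sum.inr e) = i := he ▸ Equiv.symm_swap_trans_apply_right x i j
  have hfx : x.symm (Sum.inr f) = i := hf ▸ x.symm_apply_apply i
  have hex : x.symm (Sum.inr e) = j := he ▸ x.symm_apply_apply j
  have cost_f : edgeCost G x' f = edgeCost G x f + 2 * 1 :=
    edgeCost_eq_add hx (by rw [hfx', hfx, hij']) fun a _ => vertex_eq a
  have cost_e : edgeCost G x e = edgeCost G x' e + 2 * 1 :=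
    edgeCost_eq_add hx' (by rw [hex', hex, hij']) fun a _ => (vertex_eq a).symm
  refine ⟨hx', finsum_eq_finsum_of_pair hfe (by omega) fun g hgf hge => ?_⟩
  have hg : x'.symm (Sum.inr g) = x.symm (Sum.inr g) :=
    Equiv.symm_swap_trans_apply_of_ne (hf ▸ fun h => hgf (Sum.inr_injective h))
      (he ▸ fun h => hge (Sum.inr_injective h))
  exact le_antisymm (edgeCost_le_edgeCost hg.le fun a _ => (vertex_eq a).ge)
    (edgeCost_le_edgeCost hg.ge fun a _ => (vertex_eq a).le)

end AdjacentSwap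

theorem exists_cost_lt_of_vertex_between (hx : IsCSeq G x) {e : G.edgeSet} {v : V}
    (hv : ∀ a ∈ (e : Sym2 V), x.symm (Sum.inl a) < x.symm (Sum.inl v))
    (hve : x.symm (Sum.inl v) < x.symm (Sum.inr e)) :
    ∃ x', IsCSeq G x' ∧ cost G x' < cost G x := by
  generalize hj : x.symm (Sum.inr e) = j at hve
  induction j using WellFoundedLT.induction generalizing x with
  | ind j ih =>
    obtain ⟨i, hvi, hij⟩ := exists_le_covBy_of_lt hve
    have he : x j = Sum.inr e := (x.symm_apply_eq.mp hj).symm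
    cases hxi : x i with
    | inl y =>
      refine exists_cost_lt_of_vertex_covBy_edge hx hij hxi he fun hy => ?_
      have hyv := hv y hy
      rw [← hxi, x.symm_apply_apply] at hyv
      exact (hyv.trans_le hvi).false
    | inr f =>
      obtain ⟨hx', hcost⟩ := isCSeq_and_cost_swap_trans_of_edges hx hij hxi he
      have hvx := symm_swap_trans_inl_of_inr hxi he
      have hvi' : x.symm (Sum.inl v) ≠ i := fun h =>
        Sum.inl_ne_inr ((x.symm_apply_eq.mp h).trans hxi)
      obtain ⟨x'', hx'', hlt⟩ := ih i hij.lt hx' (fun a ha => by rw [hvx, hvx]; exact hv a ha)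
        (by rw [← he, Equiv.symm_swap_trans_apply_right]) (by rw [hvx]; exact hvi.lt_of_ne hvi')
      exact ⟨x'', hx'', hlt.trans_eq hcost⟩

/-- Every minimum-cost construction sequence is greedy. -/
theorem minCost_isGreedy {V : Type*} [Fintype V] (G : SimpleGraph V)
    (x : Fin (numElts G) ≃ V ⊕ G.edgeSet) (hx : IsCSeq G x)
    (hmin : cost G x = minCost G) :
    ∀ (e : G.edgeSet) (u w : V), (e : Sym2 V) = s(u, w) →
      ∀ v : V, v ∉ ({u, w} : Set V) →
        x.symm (Sum.inl v) < max (x.symm (Sum.inl u)) (x.symm (Sum.inl w)) ∨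
          x.symm (Sum.inr e) < x.symm (Sum.inl v) := by
  intro e u w he v hv
  simp only [Set.mem_insert_iff, Set.mem_singleton_iff, not_or] at hv
  by_contra! h
  obtain ⟨hmax, hve⟩ := h
  have hpos_ne {z : V ⊕ G.edgeSet} (hz : z ≠ Sum.inl v) : x.symm z ≠ x.symm (Sum.inl v) :=
    fun h => hz (x.symm.injective h)
  have hends : ∀ a ∈ (e : Sym2 V), x.symm (Sum.inl a) < x.symm (Sum.inl v) := by
    intro a ha
    rw [he, Sym2.mem_iff] at ha
    rcases ha with rfl | rfl
    · exact ((le_max_left _ _).trans hmax).lt_of_ne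
        (hpos_ne (Sum.inl_injective.ne (Ne.symm hv.1)))
    · exact ((le_max_right _ _).trans hmax).lt_of_ne
        (hpos_ne (Sum.inl_injective.ne (Ne.symm hv.2)))
  obtain ⟨x', hx', hlt⟩ :=
    exists_cost_lt_of_vertex_between hx hends (hve.lt_of_ne' (hpos_ne Sum.inr_ne_inl))
  exact (minCost_le hx').not_gt (hmin ▸ hlt)

end ConsCost
end

section
/- Every maximum-cost construction sequence is easy: if x is a construction sequence for a finite simple graph G with ν(x) = ν*(G), then every vertex of G precedes every edge of G in x, i.e. x⁻¹(v) < x⁻¹(e) for all vertices v and edges e. -/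
/-! If some edge precedes some vertex, then somewhere an edge `e` sits immediately before a
vertex `v`. Swapping these two neighbours keeps a construction sequence, since `v` is not an
endpoint of `e`. It moves `e` one step later, raising its cost by 2, and moves `v` one step
earlier, which does not lower the cost of any edge; so the cost strictly increases and the
sequence was not of maximum cost. -/

namespace ConsCost

variable {V : Type*} [Fintype V]

theorem _root_.Fin.exists_not_and_succ_of_le {N : ℕ} {P : Fin N → Prop} {a b : Fin N}
    (hab : a ≤ b) (ha : ¬P a) (hb : P b) :
    ∃ i j : Fin N, (j : ℕ) = i + 1 ∧ ¬P i ∧ P j := by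
  let p : ℕ → Prop := fun n => ∃ h : a + n < N, P ⟨a + n, h⟩
  have hp0 : ¬p 0 := fun ⟨_, h⟩ => ha h
  have hpb : ∃ n, p n := ⟨b - a, by omega, by simpa [Nat.add_sub_cancel' (Fin.le_def.1 hab)]⟩
  obtain ⟨n, hn, ⟨hlt, hP⟩⟩ := Nat.exists_not_and_succ_of_not_zero_of_exists hp0 hpb
  exact ⟨⟨a + n, by omega⟩, ⟨a + (n + 1), hlt⟩, by simp only; omega, fun h => hn ⟨_, h⟩, hP⟩

theorem _root_.Equiv.swap_apply_le_self {α : Type*} [LinearOrder α] [DecidableEq α] {i j k : α}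
    (hij : i ≤ j) (hk : k ≠ i) : Equiv.swap i j k ≤ k := by
  rcases eq_or_ne k j with rfl | hkj
  · rw [Equiv.swap_apply_right]; exact hij
  · rw [Equiv.swap_apply_of_ne_of_ne hk hkj]

theorem _root_.Equiv.le_swap_apply_self {α : Type*} [LinearOrder α] [DecidableEq α] {i j k : α}
    (hij : i ≤ j) (hk : k ≠ j) : k ≤ Equiv.swap i j k := by
  rcases eq_or_ne k i with rfl | hki
  · rw [Equiv.swap_apply_left]; exact hij
  · rw [Equiv.swap_apply_of_ne_of_ne hki hk]

theorem edgeCost_eq_of_coe_eq_mk (G : SimpleGraph V) (x : Fin (numElts G) ≃ V ⊕ G.edgeSet)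
    {e : G.edgeSet} {u w : V} (h : (e : Sym2 V) = s(u, w)) :
    edgeCost G x e =
      2 * (x.symm (.inr e) : ℕ) - ((x.symm (.inl u) : ℕ) + (x.symm (.inl w) : ℕ)) := by
  simp only [edgeCost, h, Sym2.lift_mk]

theorem cost_le_maxCost {G : SimpleGraph V} {x : Fin (numElts G) ≃ V ⊕ G.edgeSet}
    (hx : IsCSeq G x) : cost G x ≤ maxCost G :=
  le_csSup ((Set.finite_range (cost G)).subset <| by rintro _ ⟨y, -, rfl⟩; exact ⟨y, rfl⟩).bddAbove
    ⟨x, hx, rfl⟩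

section Rearrangement

variable {G : SimpleGraph V} {x y : Fin (numElts G) ≃ V ⊕ G.edgeSet}
  (hV : ∀ u, y.symm (.inl u) ≤ x.symm (.inl u)) (hE : ∀ e, x.symm (.inr e) ≤ y.symm (.inr e))
include hV

include hE in
theorem IsCSeq.of_le (hx : IsCSeq G x) : IsCSeq G y :=
  fun e u hu => ((hV u).trans_lt (hx e u hu)).trans_le (hE e)

include hE in
theorem edgeCost_le_edgeCost_s1 (e : G.edgeSet) : edgeCost G x e ≤ edgeCost G y e := by
  obtain ⟨⟨u, w⟩, huw⟩ := Sym2.mk_surjective (e : Sym2 V)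
  have := hV u; have := hV w; have := hE e
  rw [edgeCost_eq_of_coe_eq_mk G x huw.symm, edgeCost_eq_of_coe_eq_mk G y huw.symm]
  simp only [Fin.le_def] at *
  omega

theorem edgeCost_lt_edgeCost_s1 (hx : IsCSeq G x) {e : G.edgeSet}
    (he : x.symm (.inr e) < y.symm (.inr e)) : edgeCost G x e < edgeCost G y e := by
  obtain ⟨⟨u, w⟩, huw⟩ := Sym2.mk_surjective (e : Sym2 V)
  have := hV u; have := hV w
  have := hx e u (by simp [← huw]); have := hx e w (by simp [← huw])
  rw [edgeCost_eq_of_coe_eq_mk G x huw.symm, edgeCost_eq_of_coe_eq_mk G y huw.symm]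
  simp only [Fin.le_def, Fin.lt_def] at *
  omega

include hE in
theorem cost_lt_cost (hx : IsCSeq G x) {e : G.edgeSet}
    (he : x.symm (.inr e) < y.symm (.inr e)) : cost G x < cost G y := by
  classical
  simp only [cost, finsum_eq_sum_of_fintype]
  exact Finset.sum_lt_sum (fun e _ => edgeCost_le_edgeCost_s1 hV hE e)
    ⟨e, Finset.mem_univ _, edgeCost_lt_edgeCost_s1 hV hx he⟩

end Rearrangement

/-- Every maximum-cost construction sequence is easy: every vertex precedes every edge. -/
theorem maxCost_isEasy {V : Type*} [Fintype V] (G : SimpleGraph V)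
    (x : Fin (numElts G) ≃ V ⊕ G.edgeSet) (hx : IsCSeq G x)
    (hmax : cost G x = maxCost G) :
    ∀ (v : V) (e : G.edgeSet), x.symm (Sum.inl v) < x.symm (Sum.inr e) := by
  by_contra! ⟨v, e, hve⟩
  obtain ⟨i, j, hji, hi, hj⟩ := Fin.exists_not_and_succ_of_le (P := fun k => (x k).isLeft) hve
    (by simp) (by simp)
  obtain ⟨e₀, hxi⟩ := Sum.isRight_iff.1 (Sum.not_isLeft.1 hi)
  have hij : i < j := by rw [Fin.lt_def]; omega
  let y := (Equiv.swap i j).trans x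
  have hy : ∀ a, y.symm a = Equiv.swap i j (x.symm a) := fun a => by
    simp [y, Equiv.symm_swap]
  have hV : ∀ u, y.symm (.inl u) ≤ x.symm (.inl u) := fun u => by
    rw [hy]
    exact Equiv.swap_apply_le_self hij.le fun h => by simp [← h] at hi
  have hE : ∀ e, x.symm (.inr e) ≤ y.symm (.inr e) := fun e => by
    rw [hy]
    exact Equiv.le_swap_apply_self hij.le fun h => by simp [← h] at hj
  have he₀ : x.symm (.inr e₀) < y.symm (.inr e₀) := by
    rw [hy, x.symm_apply_eq.2 hxi.symm, Equiv.swap_apply_left]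
    exact hij
  exact (cost_lt_cost hV hE hx he₀).not_ge (hmax ▸ cost_le_maxCost (hx.of_le hV hE))

end ConsCost
end

section
/- A maximum-cost construction sequence places vertices in non-increasing order of degree: if x is a construction sequence for a finite simple graph G with ν(x) = ν*(G), then for any two vertices u, v of G with x⁻¹(u) < x⁻¹(v), one has deg(u) ≥ deg(v). -/
namespace ConsCost

variable {V : Type*} [Fintype V]

/-! In a construction sequence no truncated subtraction occurs, so
`ν(x) = 2 ∑_e x⁻¹(e) - ∑_v deg(v) x⁻¹(v)` is linear in the positions, and swapping the entries at
positions `i < j` changes it by `(w(x i) - w(x j)) (j - i)`, where `w` is `2` on edges and `-deg` on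
vertices. If `u` comes before `v` but `deg u < deg v`, swapping `u` and `v` gains
`(deg v - deg u)(x⁻¹v - x⁻¹u) > 0`. To keep every edge at `u` behind `u`, then swap `u` with the
first edge after `x⁻¹u` if it comes before `x⁻¹v`; this gains `(2 + deg u)(…) ≥ 0` more. So `x`
was not of maximum cost. -/

open Finset

section Positions

variable {α : Type*} {n : ℕ}

def posSum (w : α → ℤ) (x : Fin n ≃ α) : ℤ :=
  ∑ k, w (x k) * k

theorem swap_apply_eq_add_ite (i j k : Fin n) :
    (Equiv.swap i j k : ℤ) =
      k + (if k = i then (j - i : ℤ) else 0) + (if k = j then (i - j : ℤ) else 0) := by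
  rw [Equiv.swap_apply_def]
  split_ifs <;> simp_all

theorem posSum_swap_trans (w : α → ℤ) (x : Fin n ≃ α) (i j : Fin n) :
    posSum w ((Equiv.swap i j).trans x) = posSum w x + (w (x i) - w (x j)) * (j - i) := by
  have reindex : posSum w ((Equiv.swap i j).trans x) = ∑ k, w (x k) * Equiv.swap i j k :=
    Fintype.sum_equiv (Equiv.swap i j) _ _ fun k => by simp
  rw [reindex, posSum]
  simp only [swap_apply_eq_add_ite, mul_add, sum_add_distrib, mul_ite, mul_zero, sum_ite_eq',
    mem_univ, if_true]
  ring

theorem exists_first_isRight_or_eq {β : Type*} (x : Fin n ≃ α ⊕ β) {i j : Fin n} (hij : i < j) :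
    ∃ q, i < q ∧ q ≤ j ∧ (q = j ∨ (x q).isRight) ∧ ∀ k, i < k → (x k).isRight → q ≤ k := by
  classical
  let S := univ.filter fun k => i < k ∧ (k = j ∨ (x k).isRight)
  have hj : j ∈ S := by simp [S, hij]
  obtain ⟨-, hiq, hq⟩ := mem_filter.mp (S.min'_mem ⟨j, hj⟩)
  refine ⟨S.min' ⟨j, hj⟩, hiq, S.min'_le j hj, hq, fun k hik hk => S.min'_le k ?_⟩
  simp [S, hik, hk]

end Positions

theorem _root_.SimpleGraph.sum_edgeSet_lift_eq_sum_degree_smul {M : Type*} [AddCommMonoid M]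
    (G : SimpleGraph V) [DecidableRel G.Adj] [Fintype G.edgeSet] (f : V → M) :
    ∑ e : G.edgeSet, Sym2.lift ⟨fun a b => f a + f b, fun _ _ => add_comm _ _⟩ (e : Sym2 V) =
      ∑ v, G.degree v • f v := by
  classical
  have lift_eq : ∀ e : G.edgeSet, Sym2.lift ⟨fun a b => f a + f b, fun _ _ => add_comm _ _⟩
      (e : Sym2 V) = ∑ v, if v ∈ (e : Sym2 V) then f v else 0 := by
    rintro ⟨e, he⟩
    induction e using Sym2.ind with
    | _ a b =>
      rw [← sum_filter, show univ.filter (· ∈ s(a, b)) = {a, b} by ext; simp]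
      simp [sum_pair (G.mem_edgeSet.mp he).ne]
  have card_eq : ∀ v, #(univ.filter fun e : G.edgeSet => v ∈ (e : Sym2 V)) = G.degree v := by
    intro v
    rw [← G.card_incidenceSet_eq_degree, ← Fintype.card_subtype]
    exact Fintype.card_congr (Equiv.subtypeSubtypeEquivSubtypeInter _ (v ∈ ·))
  simp_rw [lift_eq]
  rw [sum_comm]
  simp_rw [← sum_filter, sum_const, card_eq]

section Cost

variable {G : SimpleGraph V} {x y : Fin (numElts G) ≃ V ⊕ G.edgeSet}

def cseqWeight (G : SimpleGraph V) [DecidableRel G.Adj] : V ⊕ G.edgeSet → ℤ :=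
  Sum.elim (fun v => -(G.degree v : ℤ)) fun _ => 2

theorem IsCSeq.edgeCost_add_lift (hx : IsCSeq G x) (e : G.edgeSet) :
    edgeCost G x e + Sym2.lift ⟨fun a b => (x.symm (Sum.inl a) : ℕ) + x.symm (Sum.inl b),
      fun _ _ => add_comm _ _⟩ (e : Sym2 V) = 2 * x.symm (Sum.inr e) := by
  obtain ⟨e, he⟩ := e
  induction e using Sym2.ind with
  | _ a b =>
    have ha := hx ⟨_, he⟩ a (Sym2.mem_mk_left a b)
    have hb := hx ⟨_, he⟩ b (Sym2.mem_mk_right a b)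
    simp only [edgeCost, Sym2.lift_mk, Fin.lt_def] at ha hb ⊢
    omega

theorem IsCSeq.cost_eq_posSum [DecidableRel G.Adj] (hx : IsCSeq G x) :
    (cost G x : ℤ) = posSum (cseqWeight G) x := by
  classical
  have double_count : cost G x + ∑ v, G.degree v • (x.symm (Sum.inl v) : ℕ) =
      ∑ e : G.edgeSet, 2 * (x.symm (Sum.inr e) : ℕ) := by
    rw [cost, finsum_eq_sum_of_fintype, ← G.sum_edgeSet_lift_eq_sum_degree_smul,
      ← sum_add_distrib]
    exact sum_congr rfl fun e _ => hx.edgeCost_add_lift e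
  have reindex : posSum (cseqWeight G) x = ∑ a, cseqWeight G a * x.symm a :=
    (Fintype.sum_equiv x.symm _ _ fun k => by simp).symm
  rw [reindex, Fintype.sum_sum_type]
  simp only [cseqWeight, Sum.elim_inl, Sum.elim_inr, neg_mul, sum_neg_distrib]
  rw [← mul_sum]
  zify at double_count
  push_cast [smul_eq_mul, ← mul_sum] at double_count
  linarith

theorem cost_le_maxCost_s2 (hy : IsCSeq G y) : cost G y ≤ maxCost G := by
  refine le_csSup (Set.Finite.bddAbove ?_) ⟨y, hy, rfl⟩
  exact (Set.finite_range (cost G)).subset fun _ ⟨z, _, hz⟩ => ⟨z, hz⟩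

theorem IsCSeq.of_vertices_le_of_edges_ge (hx : IsCSeq G x) (u : V)
    (hvert : ∀ w, w ≠ u → y.symm (Sum.inl w) ≤ x.symm (Sum.inl w))
    (hedge : ∀ e, x.symm (Sum.inr e) ≤ y.symm (Sum.inr e))
    (hu : ∀ e : G.edgeSet, u ∈ (e : Sym2 V) → y.symm (Sum.inl u) ≤ y.symm (Sum.inr e)) :
    IsCSeq G y := by
  intro e w hw
  rcases eq_or_ne w u with rfl | hwu
  · exact (hu e hw).lt_of_ne (y.symm.injective.ne Sum.inl_ne_inr)
  · exact ((hvert w hwu).trans_lt (hx e w hw)).trans_le (hedge e)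

section Rotation

variable {u v : V} {q : Fin (numElts G)}

theorem IsCSeq.swap_swap_trans (hx : IsCSeq G x) (huv : x.symm (Sum.inl u) < x.symm (Sum.inl v))
    (hpuq : x.symm (Sum.inl u) < q) (hqpv : q ≤ x.symm (Sum.inl v))
    (hq : q = x.symm (Sum.inl v) ∨ (x q).isRight)
    (hq_min : ∀ k, x.symm (Sum.inl u) < k → (x k).isRight → q ≤ k) :
    IsCSeq G ((Equiv.swap q (x.symm (Sum.inl v))).trans
      ((Equiv.swap (x.symm (Sum.inl u)) (x.symm (Sum.inl v))).trans x)) := by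
  set pu := x.symm (Sum.inl u)
  set pv := x.symm (Sum.inl v)
  set y := (Equiv.swap q pv).trans ((Equiv.swap pu pv).trans x)
  have hy_symm : ∀ a, y.symm a = Equiv.swap q pv (Equiv.swap pu pv (x.symm a)) := fun a => by
    simp [y, Equiv.symm_swap]
  have hyu : y.symm (Sum.inl u) = q := by simp [hy_symm, pu, pv]
  have hyv : y.symm (Sum.inl v) = pu := by
    rw [hy_symm, Equiv.swap_apply_right, Equiv.swap_apply_of_ne_of_ne hpuq.ne huv.ne]
  have hyw : ∀ w, w ≠ u → w ≠ v → y.symm (Sum.inl w) = x.symm (Sum.inl w) := by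
    intro w hwu hwv
    have hpu : x.symm (Sum.inl w) ≠ pu := x.symm.injective.ne (by simpa using hwu)
    have hpv : x.symm (Sum.inl w) ≠ pv := x.symm.injective.ne (by simpa using hwv)
    have hq' : x.symm (Sum.inl w) ≠ q := by
      rintro rfl
      rcases hq with hq | hq
      · exact hpv hq
      · simp at hq
    rw [hy_symm, Equiv.swap_apply_of_ne_of_ne hpu hpv, Equiv.swap_apply_of_ne_of_ne hq' hpv]
  have hye : ∀ e, x.symm (Sum.inr e) ≤ y.symm (Sum.inr e) := by
    intro e
    have hpu : x.symm (Sum.inr e) ≠ pu := x.symm.injective.ne Sum.inr_ne_inl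
    have hpv : x.symm (Sum.inr e) ≠ pv := x.symm.injective.ne Sum.inr_ne_inl
    rw [hy_symm, Equiv.swap_apply_of_ne_of_ne hpu hpv]
    rcases eq_or_ne (x.symm (Sum.inr e)) q with h | h
    · rw [h, Equiv.swap_apply_left]
      exact hqpv
    · rw [Equiv.swap_apply_of_ne_of_ne h hpv]
  refine hx.of_vertices_le_of_edges_ge u (fun w hwu => ?_) hye fun e he => ?_
  · rcases eq_or_ne w v with rfl | hwv
    · exact hyv ▸ huv.le
    · exact (hyw w hwu hwv).le
  · exact hyu ▸ (hq_min _ (hx e u he) (by simp)).trans (hye e)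

theorem posSum_lt_posSum_swap_swap_trans [DecidableRel G.Adj]
    (huv : x.symm (Sum.inl u) < x.symm (Sum.inl v)) (hdeg : G.degree u < G.degree v)
    (hpuq : x.symm (Sum.inl u) < q) (hqpv : q ≤ x.symm (Sum.inl v))
    (hq : q = x.symm (Sum.inl v) ∨ (x q).isRight) :
    posSum (cseqWeight G) x < posSum (cseqWeight G) ((Equiv.swap q (x.symm (Sum.inl v))).trans
      ((Equiv.swap (x.symm (Sum.inl u)) (x.symm (Sum.inl v))).trans x)) := by
  set pu := x.symm (Sum.inl u)
  set pv := x.symm (Sum.inl v)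
  set x₁ := (Equiv.swap pu pv).trans x
  have gain_swap : posSum (cseqWeight G) x < posSum (cseqWeight G) x₁ := by
    have : (pu : ℤ) < pv := by exact_mod_cast huv
    rw [posSum_swap_trans]
    simp only [pu, pv, Equiv.apply_symm_apply, cseqWeight, Sum.elim_inl]
    nlinarith
  refine gain_swap.trans_le ?_
  rw [posSum_swap_trans (cseqWeight G) x₁ q pv]
  rcases hq with hq | hq
  · simp [hq]
  have hqv : q ≠ pv := by
    rintro rfl
    simp [pv] at hq
  have hq_weight : cseqWeight G (x₁ q) = 2 := by
    obtain ⟨e, he⟩ := Sum.isRight_iff.mp hq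
    simp [x₁, Equiv.swap_apply_of_ne_of_ne hpuq.ne' hqv, he, cseqWeight]
  have : (q : ℤ) ≤ pv := by exact_mod_cast hqpv
  rw [hq_weight]
  simp only [x₁, Equiv.trans_apply, Equiv.swap_apply_right, pu,
    Equiv.apply_symm_apply, cseqWeight, Sum.elim_inl]
  nlinarith

end Rotation

theorem IsCSeq.exists_cost_gt [DecidableRel G.Adj] (hx : IsCSeq G x) {u v : V}
    (huv : x.symm (Sum.inl u) < x.symm (Sum.inl v)) (hdeg : G.degree u < G.degree v) :
    ∃ y, IsCSeq G y ∧ cost G x < cost G y := by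
  obtain ⟨q, hpuq, hqpv, hq, hq_min⟩ := exists_first_isRight_or_eq x huv
  have hy := hx.swap_swap_trans huv hpuq hqpv hq hq_min
  refine ⟨_, hy, ?_⟩
  zify
  rw [hx.cost_eq_posSum, hy.cost_eq_posSum]
  exact posSum_lt_posSum_swap_swap_trans huv hdeg hpuq hqpv hq

end Cost

/-- A maximum-cost construction sequence places vertices in non-increasing order of degree. -/
theorem maxCost_degree_monotone {V : Type*} [Fintype V] (G : SimpleGraph V)
    [DecidableRel G.Adj]
    (x : Fin (numElts G) ≃ V ⊕ G.edgeSet) (hx : IsCSeq G x)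
    (hmax : cost G x = maxCost G) :
    ∀ u v : V, x.symm (Sum.inl u) < x.symm (Sum.inl v) → G.degree v ≤ G.degree u := by
  intro u v huv
  by_contra! hdeg
  obtain ⟨y, hy, hlt⟩ := hx.exists_cost_gt huv hdeg
  exact (cost_le_maxCost_s2 hy).not_gt (hmax ▸ hlt)

end ConsCost
end

section
/- Monotonicity of construction costs under subgraphs: if H is a subgraph of a finite simple graph G, then ν_*(H) ≤ ν_*(G); and if moreover H is a spanning subgraph of G (H has the same vertex set as G and every edge of H is an edge of G), then ν*(H) ≤ ν*(G). -/
/-! Both bounds compare a construction sequence `y` of the smaller graph with a construction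
sequence `x` of the larger one that lists the elements of the smaller graph in the same relative
order. Then any two elements are at least as far apart in `x` as in `y`, so every edge of the
smaller graph costs at least as much in `x` as in `y`. For `ν_*`, such a `y` is obtained by
restricting an optimal `x`; for `ν*` with a spanning subgraph, such an `x` is obtained by appending
the missing edges to an optimal `y`: every vertex already occurs in `y`, so they come late enough. -/

namespace ConsCost

variable {V : Type*} [Fintype V]

open Function SimpleGraph

lemma _root_.StrictMono.fin_sub_le_sub {m n : ℕ} {g : Fin m → Fin n} (hg : StrictMono g)
    (i j : Fin m) : (j : ℕ) - i ≤ (g j : ℕ) - g i := by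
  rcases lt_or_ge j i with hji | hij
  · omega
  have hcard : (Finset.Icc i j).card ≤ (Finset.Icc (g i) (g j)).card :=
    Finset.card_le_card_of_injOn g
      (fun k hk => by
        obtain ⟨hik, hkj⟩ := Finset.mem_Icc.mp hk
        exact Finset.mem_Icc.mpr ⟨hg.monotone hik, hg.monotone hkj⟩)
      hg.injective.injOn
  simp only [Fin.card_Icc] at hcard
  omega

lemma _root_.exists_equiv_fin_strictMono_comp {β : Type*} [Finite β] {m n : ℕ} {g : β → Fin n}
    (hg : Injective g) (hm : Nat.card β = m) : ∃ y : Fin m ≃ β, StrictMono (g ∘ y) := by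
  classical
  have : Fintype.card (Set.range g) = m := by
    rw [Fintype.card_eq_nat_card, Nat.card_range_of_injective hg, hm]
  let o := Fintype.orderIsoFinOfCardEq (Set.range g) this
  refine ⟨o.toEquiv.trans (Equiv.ofInjective g hg).symm, fun i j hij => ?_⟩
  simp only [comp_apply, Equiv.trans_apply, OrderIso.coe_toEquiv, Equiv.apply_ofInjective_symm]
  exact o.strictMono hij

lemma _root_.exists_equiv_fin_extend {α β : Type*} [Finite α] {ι : β → α} (hι : Injective ι)
    {m N : ℕ} (y : Fin m ≃ β) (hN : Nat.card α = N) :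
    ∃ x : Fin N ≃ α, (∀ b, (x.symm (ι b) : ℕ) = y.symm b) ∧
      ∀ a ∉ Set.range ι, m ≤ x.symm a := by
  classical
  obtain ⟨k, ⟨z⟩⟩ : ∃ k, Nonempty (((Set.range ι)ᶜ : Set α) ≃ Fin k) :=
    ⟨_, ⟨Finite.equivFin _⟩⟩
  let e : α ≃ Fin m ⊕ Fin k :=
    (Equiv.Set.sumCompl _).symm.trans
      (Equiv.sumCongr ((Equiv.ofInjective ι hι).symm.trans y.symm) z)
  have hcard : m + k = N := by
    rw [← hN, Nat.card_congr e, Nat.card_sum, Nat.card_fin, Nat.card_fin]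
  refine ⟨(e.trans (finSumFinEquiv.trans (finCongr hcard))).symm, fun b => ?_, fun a ha => ?_⟩
  · simp [e, Equiv.Set.sumCompl_symm_apply_of_mem (Set.mem_range_self b)]
  · simp [e, Equiv.Set.sumCompl_symm_apply_of_notMem ha]

lemma natCard_sum_edgeSet (G : SimpleGraph V) : Nat.card (V ⊕ G.edgeSet) = numElts G := by
  rw [Nat.card_sum, Nat.card_eq_fintype_card, numElts]

lemma exists_isCSeq (G : SimpleGraph V) : ∃ x, IsCSeq G x := by
  obtain ⟨x, hvert, hedge⟩ := exists_equiv_fin_extend Sum.inl_injective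
    (Finite.equivFin V).symm (natCard_sum_edgeSet G)
  refine ⟨x, fun e v _ => Fin.lt_def.mpr ?_⟩
  have hv := hvert v
  have he := hedge (Sum.inr e) (by simp)
  omega

lemma edgeCost_eq (G : SimpleGraph V) (x : Fin (numElts G) ≃ V ⊕ G.edgeSet) {e : G.edgeSet}
    {u w : V} (h : (e : Sym2 V) = s(u, w)) :
    edgeCost G x e = 2 * (x.symm (.inr e) : ℕ) - (x.symm (.inl u) + x.symm (.inl w) : ℕ) := by
  rw [edgeCost, h, Sym2.lift_mk]

lemma bddAbove_costs (G : SimpleGraph V) : BddAbove {c | ∃ x, IsCSeq G x ∧ cost G x = c} := by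
  refine ((Set.finite_range (cost G)).subset ?_).bddAbove
  rintro _ ⟨x, -, rfl⟩
  exact ⟨x, rfl⟩

section Hom

variable {V' : Type*} [Fintype V'] {G : SimpleGraph V} {G' : SimpleGraph V'}

lemma minCost_le_minCost
    (h : ∀ x, IsCSeq G x → ∃ y, IsCSeq G' y ∧ cost G' y ≤ cost G x) :
    minCost G' ≤ minCost G := by
  obtain ⟨x₀, hx₀⟩ := exists_isCSeq G
  obtain ⟨x, hx, hcost⟩ := Nat.sInf_mem (s := {c | ∃ x, IsCSeq G x ∧ cost G x = c})
    ⟨_, x₀, hx₀, rfl⟩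
  obtain ⟨y, hy, hle⟩ := h x hx
  calc minCost G' ≤ cost G' y := Nat.sInf_le ⟨y, hy, rfl⟩
    _ ≤ cost G x := hle
    _ = minCost G := hcost

lemma maxCost_le_maxCost
    (h : ∀ y, IsCSeq G' y → ∃ x, IsCSeq G x ∧ cost G' y ≤ cost G x) :
    maxCost G' ≤ maxCost G := by
  obtain ⟨y₀, hy₀⟩ := exists_isCSeq G'
  obtain ⟨y, hy, hcost⟩ := Nat.sSup_mem (s := {c | ∃ y, IsCSeq G' y ∧ cost G' y = c})
    ⟨_, y₀, hy₀, rfl⟩ (bddAbove_costs G')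
  obtain ⟨x, hx, hle⟩ := h y hy
  calc maxCost G' = cost G' y := hcost.symm
    _ ≤ cost G x := hle
    _ ≤ maxCost G := le_csSup (bddAbove_costs G) ⟨x, hx, rfl⟩

variable (f : G' →g G) {x : Fin (numElts G) ≃ V ⊕ G.edgeSet}
  {y : Fin (numElts G') ≃ V' ⊕ G'.edgeSet}

lemma edgeCost_le_edgeCost_mapEdgeSet (hy : IsCSeq G' y)
    (hmono : StrictMono (x.symm ∘ Sum.map f f.mapEdgeSet ∘ y)) (e : G'.edgeSet) :
    edgeCost G' y e ≤ edgeCost G x (f.mapEdgeSet e) := by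
  set ι := Sum.map f f.mapEdgeSet
  have hgap (a b) : (y.symm b : ℕ) - y.symm a ≤ (x.symm (ι b) : ℕ) - x.symm (ι a) := by
    simpa using hmono.fin_sub_le_sub (y.symm a) (y.symm b)
  have hlt {a b} (h : y.symm a < y.symm b) : x.symm (ι a) < x.symm (ι b) := by
    simpa using hmono h
  obtain ⟨e, he⟩ := e
  induction e using Sym2.ind with | _ u w => ?_
  have hu := hy ⟨_, he⟩ u (Sym2.mem_mk_left u w)
  have hw := hy ⟨_, he⟩ w (Sym2.mem_mk_right u w)
  have hu' := hlt hu
  have hw' := hlt hw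
  have gu := hgap (.inl u) (.inr ⟨_, he⟩)
  have gw := hgap (.inl w) (.inr ⟨_, he⟩)
  simp only [ι, Sum.map_inl, Sum.map_inr, Fin.lt_def] at hu hw hu' hw' gu gw
  rw [edgeCost_eq G' y rfl, edgeCost_eq G x (u := f u) (w := f w) rfl]
  omega

lemma cost_le_cost_of_strictMono (hf : Injective f) (hy : IsCSeq G' y)
    (hmono : StrictMono (x.symm ∘ Sum.map f f.mapEdgeSet ∘ y)) : cost G' y ≤ cost G x := by
  classical
  have := Fintype.ofFinite G.edgeSet
  have := Fintype.ofFinite G'.edgeSet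
  rw [cost, cost, finsum_eq_sum_of_fintype, finsum_eq_sum_of_fintype]
  calc ∑ e, edgeCost G' y e ≤ ∑ e, edgeCost G x (f.mapEdgeSet e) :=
        Finset.sum_le_sum fun e _ => edgeCost_le_edgeCost_mapEdgeSet f hy hmono e
    _ = ∑ e ∈ Finset.univ.map ⟨_, Hom.mapEdgeSet.injective f hf⟩, edgeCost G x e := by
        rw [Finset.sum_map]; rfl
    _ ≤ ∑ e, edgeCost G x e := Finset.sum_le_sum_of_subset (Finset.subset_univ _)

lemma exists_isCSeq_cost_le_of_injective (hf : Injective f) (hx : IsCSeq G x) :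
    ∃ y, IsCSeq G' y ∧ cost G' y ≤ cost G x := by
  have hι : Injective (Sum.map f f.mapEdgeSet) := hf.sumMap (Hom.mapEdgeSet.injective f hf)
  obtain ⟨y, hmono⟩ :=
    exists_equiv_fin_strictMono_comp (x.symm.injective.comp hι) (natCard_sum_edgeSet G')
  have hy : IsCSeq G' y := fun e v hv => by
    rw [← hmono.lt_iff_lt]
    simpa using hx (f.mapEdgeSet e) (f v) (Sym2.mem_map.mpr ⟨v, hv, rfl⟩)
  exact ⟨y, hy, cost_le_cost_of_strictMono f hf hy hmono⟩

lemma exists_isCSeq_cost_le_of_bijective (hf : Bijective f) (hy : IsCSeq G' y) :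
    ∃ x, IsCSeq G x ∧ cost G' y ≤ cost G x := by
  obtain ⟨x, hpos, hlate⟩ := exists_equiv_fin_extend
    (hf.1.sumMap (Hom.mapEdgeSet.injective f hf.1)) y (natCard_sum_edgeSet G)
  have hmono : StrictMono (x.symm ∘ Sum.map f f.mapEdgeSet ∘ y) := fun i j hij => by
    simpa only [Fin.lt_def, comp_apply, hpos, Equiv.symm_apply_apply] using hij
  have hx : IsCSeq G x := by
    intro e v hv
    obtain ⟨v, rfl⟩ := hf.2 v
    by_cases he : e ∈ Set.range f.mapEdgeSet
    · obtain ⟨e, rfl⟩ := he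
      obtain ⟨u, hu, huv⟩ := Sym2.mem_map.mp hv
      obtain rfl := hf.1 huv
      simpa using hmono (hy e u hu)
    · have hxv := hpos (.inl v)
      have hlt := (y.symm (.inl v)).isLt
      have hle := hlate (.inr e) (by rintro ⟨a | a, h⟩ <;> simp at h; exact he ⟨a, h⟩)
      rw [Sum.map_inl] at hxv
      rw [Fin.lt_def]
      omega
  exact ⟨x, hx, cost_le_cost_of_strictMono f hf.1 hy hmono⟩

end Hom

/-- Monotonicity of construction costs under subgraphs: `ν_*(H) ≤ ν_*(G)` for any
subgraph `H` of `G`, and `ν*(H) ≤ ν*(G)` when `H` is a spanning subgraph. -/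
theorem cost_mono_of_subgraph {V : Type*} [Fintype V] (G : SimpleGraph V)
    (H : G.Subgraph) [Fintype ↥H.verts] :
    minCost H.coe ≤ minCost G ∧
      (H.verts = Set.univ → maxCost H.coe ≤ maxCost G) := by
  refine ⟨minCost_le_minCost fun x hx =>
    exists_isCSeq_cost_le_of_injective H.hom Subgraph.hom_injective hx, fun hspan => ?_⟩
  have hsurj : Surjective H.hom := fun v => ⟨⟨v, hspan ▸ Set.mem_univ v⟩, rfl⟩
  exact maxCost_le_maxCost fun y hy =>
    exists_isCSeq_cost_le_of_bijective H.hom ⟨Subgraph.hom_injective, hsurj⟩ hy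

end ConsCost
end

section
/- Cost of an easy construction sequence from the degree sequence: if x is an easy construction sequence for a finite simple graph G placing the vertices in the order v_1, …, v_p, and d_j = deg(v_j), then ν(x) = q(2p + q + 1) − Σ_{j=1}^{p} j·d_j. -/
open Finset

def Sym2.endpointSum {V M : Type*} [AddCommMonoid M] (f : V → M) : Sym2 V → M :=
  Sym2.lift ⟨fun u w => f u + f w, fun _ _ => add_comm _ _⟩

namespace SimpleGraph

variable {V M : Type*} [Fintype V] [AddCommMonoid M] (G : SimpleGraph V) [DecidableRel G.Adj]

lemma sum_dart_fst (f : V → M) : ∑ d : G.Dart, f d.fst = ∑ v, G.degree v • f v := by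
  classical
  rw [← sum_fiberwise univ (fun d : G.Dart => d.fst)]
  refine sum_congr rfl fun v _ => ?_
  rw [sum_congr rfl fun d hd => by rw [(mem_filter.mp hd).2], sum_const,
    G.dart_fst_fiber_card_eq_degree]

lemma sum_dart_fst_eq_sum_endpointSum (f : V → M) :
    ∑ d : G.Dart, f d.fst = ∑ e ∈ G.edgeFinset, Sym2.endpointSum f e := by
  classical
  rw [← sum_fiberwise_of_maps_to (g := Dart.edge) fun d _ => G.mem_edgeFinset.mpr d.edge_mem]
  refine sum_congr rfl fun e he => ?_
  induction e using Sym2.ind with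
  | _ u w =>
    let d : G.Dart := ⟨(u, w), G.mem_edgeFinset.mp he⟩
    rw [show univ.filter (fun d' : G.Dart => d'.edge = s(u, w)) = {d, d.symm} from d.edge_fiber,
      sum_pair d.symm_ne.symm]
    rfl

lemma sum_edgeSet_endpointSum (f : V → M) :
    ∑ e : G.edgeSet, Sym2.endpointSum f e = ∑ v, G.degree v • f v := by
  rw [← sum_dart_fst, sum_dart_fst_eq_sum_endpointSum]
  exact (sum_subtype G.edgeFinset (fun _ => G.mem_edgeFinset) (Sym2.endpointSum f)).symm

end SimpleGraph

namespace Equiv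

variable {α β : Type*} [Fintype α] {n : ℕ}

lemma card_le_symm_inr (x : Fin n ≃ α ⊕ β) (hx : ∀ a b, x.symm (.inl a) < x.symm (.inr b))
    (b : β) : Fintype.card α ≤ x.symm (.inr b) := by
  simpa using card_le_card_of_injOn (s := univ) (t := range (x.symm (.inr b)))
    (fun a => (x.symm (.inl a) : ℕ)) (fun a _ => mem_range.mpr (hx a b))
    fun a _ a' _ h => Sum.inl_injective (x.symm.injective (Fin.ext h))

variable [Fintype β]

lemma image_symm_inr_eq_Ico (x : Fin n ≃ α ⊕ β) (hx : ∀ a b, x.symm (.inl a) < x.symm (.inr b)) :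
    univ.image (fun b => (x.symm (.inr b) : ℕ)) = Ico (Fintype.card α) n := by
  have hinj : Function.Injective fun b => (x.symm (.inr b) : ℕ) :=
    fun b b' h => Sum.inr_injective (x.symm.injective (Fin.ext h))
  have hn : n = Fintype.card α + Fintype.card β := by
    simpa using Fintype.card_congr x
  refine eq_of_subset_of_card_le ?_ ?_
  · simp only [subset_iff, mem_image, mem_univ, true_and, mem_Ico]
    rintro _ ⟨b, rfl⟩
    exact ⟨card_le_symm_inr x hx b, (x.symm (.inr b)).isLt⟩
  · rw [card_image_of_injective _ hinj, Nat.card_Ico, card_univ]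
    omega

lemma sum_symm_inr_eq_sum_Ico (x : Fin n ≃ α ⊕ β)
    (hx : ∀ a b, x.symm (.inl a) < x.symm (.inr b)) :
    ∑ b, (x.symm (.inr b) : ℕ) = ∑ i ∈ Ico (Fintype.card α) n, i := by
  rw [← image_symm_inr_eq_Ico x hx, sum_image fun b _ b' _ h =>
    Sum.inr_injective (x.symm.injective (Fin.ext h))]

end Equiv

lemma Finset.two_mul_sum_Ico_add_two_mul (p q : ℕ) :
    2 * ∑ i ∈ Ico p (p + q), i + 2 * q = q * (2 * p + q + 1) := by
  induction q with
  | zero => simp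
  | succ q ih =>
    rw [← add_assoc, sum_Ico_succ_top (by omega)]
    linarith

namespace ConsCost

variable {V : Type*} [Fintype V] (G : SimpleGraph V) (x : Fin (numElts G) ≃ V ⊕ G.edgeSet)

lemma edgeCost_add_endpointSum (hx : IsCSeq G x) (e : G.edgeSet) :
    edgeCost G x e + Sym2.endpointSum (fun v => (x.symm (.inl v) : ℕ)) e =
      2 * x.symm (.inr e) := by
  obtain ⟨e, he⟩ := e
  induction e using Sym2.ind with
  | _ u w =>
    have hu := hx ⟨_, he⟩ u (Sym2.mem_mk_left u w)
    have hw := hx ⟨_, he⟩ w (Sym2.mem_mk_right u w)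
    simp only [edgeCost, Sym2.endpointSum, Sym2.lift_mk]
    omega

lemma cost_add_sum_degree_mul [DecidableRel G.Adj] (hx : IsCSeq G x) :
    cost G x + ∑ v, G.degree v * x.symm (.inl v) = 2 * ∑ e, (x.symm (.inr e) : ℕ) := by
  have handshake := G.sum_edgeSet_endpointSum fun v => (x.symm (.inl v) : ℕ)
  simp only [smul_eq_mul] at handshake
  rw [mul_sum, cost, finsum_eq_sum_of_fintype, ← handshake, ← sum_add_distrib]
  exact sum_congr rfl fun e _ => edgeCost_add_endpointSum G x hx e

/-- Positions `x.symm _` are 0-indexed, hence `j = x.symm (inl v) + 1`; the identity is stated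
additively to avoid truncated subtraction. -/
theorem cost_easy_of_degrees {V : Type*} [Fintype V] (G : SimpleGraph V)
    [DecidableRel G.Adj]
    (x : Fin (numElts G) ≃ V ⊕ G.edgeSet) (hx : IsCSeq G x)
    (heasy : ∀ (v : V) (e : G.edgeSet), x.symm (Sum.inl v) < x.symm (Sum.inr e)) :
    cost G x + ∑ v : V, ((x.symm (Sum.inl v) : ℕ) + 1) * G.degree v =
      Nat.card G.edgeSet * (2 * Fintype.card V + Nat.card G.edgeSet + 1) := by
  have hdeg : ∑ v, G.degree v = 2 * Nat.card G.edgeSet := by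
    rw [G.sum_degrees_eq_twice_card_edges, G.edgeFinset_card, Nat.card_eq_fintype_card]
  calc cost G x + ∑ v : V, ((x.symm (Sum.inl v) : ℕ) + 1) * G.degree v
      = (cost G x + ∑ v, G.degree v * x.symm (.inl v)) + ∑ v, G.degree v := by
        rw [add_assoc, ← sum_add_distrib]
        exact congrArg _ (sum_congr rfl fun v _ => by ring)
    _ = 2 * ∑ i ∈ Ico (Fintype.card V) (numElts G), i + 2 * Nat.card G.edgeSet := by
        rw [cost_add_sum_degree_mul G x hx, x.sum_symm_inr_eq_sum_Ico heasy, hdeg]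
    _ = Nat.card G.edgeSet * (2 * Fintype.card V + Nat.card G.edgeSet + 1) :=
        two_mul_sum_Ico_add_two_mul _ _

end ConsCost
end

section
/- The maximum construction cost of the star K_{1,n} is ν*(K_{1,n}) = (5n² + n)/2 for all n ≥ 2. -/
namespace ConsCost

variable {V : Type*} [Fintype V]

/-- The star `K_{1,n}`: hub `0`, peripheral vertices `1, …, n`, and an edge from the
hub to each peripheral vertex. -/
def starGraph (n : ℕ) : SimpleGraph (Fin (n + 1)) :=
  SimpleGraph.fromRel (fun u _ => u = 0)

/-!
Write `π` for the position of an element in a construction sequence (counted from `0`). Summing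
`ν(uw) = 2π(uw) − π(u) − π(w)` over the edges of `K_{1,n}` gives
`ν = 2 Σₑ π(e) − n π(hub) − Σ_leaves π(v) ≤ 2 Σₑ π(e) − Σ_v π(v) = 2T − 3 Σ_v π(v)`,
where `T = n(2n+1)` is the sum of all positions. The `n + 1` vertex positions are distinct, so
`Σ_v π(v) ≥ n(n+1)/2`, whence `2ν ≤ 5n² + n`. Listing the hub, the leaves, and then the edges in
the order of their leaves attains the bound.
-/

open Finset Function

lemma sum_range_card_le_sum_of_injective {ι : Type*} [Fintype ι] {f : ι → ℕ}
    (hf : Injective f) : ∑ i ∈ range (Fintype.card ι), i ≤ ∑ i, f i := by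
  have hinj : Injective fun i => (f i : ℤ) := Nat.cast_injective.comp hf
  have h := sum_range_le_sum (s := univ.image fun i => (f i : ℤ)) (c := 0) (by simp)
  rw [card_image_of_injective _ hinj, sum_image hinj.injOn, card_univ] at h
  zify
  simpa using h

lemma sum_range_id_mul_two_add_self (n : ℕ) : (∑ i ∈ range n, i) * 2 + n = n * n := by
  rw [sum_range_id_mul_two]
  cases n with
  | zero => rfl
  | succ m => rw [Nat.add_sub_cancel]; ring

lemma sum_val_symm {α : Type*} [Fintype α] {N : ℕ} (x : Fin N ≃ α) :
    ∑ a, (x.symm a : ℕ) = ∑ i ∈ range N, i := by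
  rw [Equiv.sum_comp x.symm (fun i : Fin N => (i : ℕ)), Fin.sum_univ_eq_sum_range (fun i => i)]

section ConstructionSequence

variable {G : SimpleGraph V} {x : Fin (numElts G) ≃ V ⊕ G.edgeSet}

lemma IsCSeq.edgeCost_add (hx : IsCSeq G x) {e : G.edgeSet} {u w : V}
    (he : (e : Sym2 V) = s(u, w)) :
    edgeCost G x e + ((x.symm (.inl u) : ℕ) + x.symm (.inl w)) = 2 * (x.symm (.inr e) : ℕ) := by
  have hu := hx e u (by simp [he])
  have hw := hx e w (by simp [he])
  rw [Fin.lt_def] at hu hw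
  simp only [edgeCost, he, Sym2.lift_mk]
  omega

lemma isCSeq_of_forall_lt (hx : ∀ v e, x.symm (.inl v) < x.symm (.inr e)) : IsCSeq G x :=
  fun e v _ => hx v e

lemma cost_eq_sum [Fintype G.edgeSet] (x : Fin (numElts G) ≃ V ⊕ G.edgeSet) :
    cost G x = ∑ e, edgeCost G x e :=
  finsum_eq_sum_of_fintype _

lemma sum_vertex_pos_add_sum_edge_pos [Fintype G.edgeSet] (x : Fin (numElts G) ≃ V ⊕ G.edgeSet) :
    ∑ v, (x.symm (.inl v) : ℕ) + ∑ e, (x.symm (.inr e) : ℕ) = ∑ i ∈ range (numElts G), i := by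
  rw [← sum_val_symm x, Fintype.sum_sum_type]

lemma sum_range_card_le_sum_vertex_pos (x : Fin (numElts G) ≃ V ⊕ G.edgeSet) :
    ∑ i ∈ range (Fintype.card V), i ≤ ∑ v, (x.symm (.inl v) : ℕ) :=
  sum_range_card_le_sum_of_injective
    (Fin.val_injective.comp (x.symm.injective.comp Sum.inl_injective))

end ConstructionSequence

section Star

variable {n : ℕ}

lemma starGraph_adj {u v : Fin (n + 1)} :
    (starGraph n).Adj u v ↔ u ≠ v ∧ (u = 0 ∨ v = 0) := by
  simp [starGraph]

instance : DecidableRel (starGraph n).Adj := fun _ _ => decidable_of_iff _ starGraph_adj.symm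

variable (n) in
def starEdge (j : Fin n) : (starGraph n).edgeSet :=
  ⟨s(0, j.succ), starGraph_adj.2 ⟨(Fin.succ_ne_zero j).symm, .inl rfl⟩⟩

lemma starEdge_bijective : Bijective (starEdge n) := by
  refine ⟨fun a b hab => Fin.succ_injective n (Sym2.congr_right.mp (congrArg Subtype.val hab)), ?_⟩
  rintro ⟨e, he⟩
  induction e using Sym2.ind with
  | _ u v =>
    obtain ⟨hne, rfl | rfl⟩ := starGraph_adj.1 he
    · exact ⟨v.pred hne.symm, by simp [starEdge]⟩
    · exact ⟨u.pred hne, Subtype.ext (by simp [starEdge, Sym2.eq_swap])⟩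

variable (n) in
noncomputable def starEdgeEquiv : Fin n ≃ (starGraph n).edgeSet :=
  .ofBijective _ starEdge_bijective

variable (n) in
lemma numElts_starGraph : numElts (starGraph n) = (n + 1) + n := by
  rw [numElts, Nat.card_eq_of_equiv_fin (starEdgeEquiv n).symm, Fintype.card_fin]

lemma IsCSeq.two_cost_starGraph_le {x : Fin (numElts (starGraph n)) ≃ Fin (n + 1) ⊕ _}
    (hx : IsCSeq (starGraph n) x) : 2 * cost (starGraph n) x ≤ 5 * n ^ 2 + n := by
  set h : ℕ := (x.symm (.inl 0) : ℕ)
  set L : ℕ := ∑ j : Fin n, (x.symm (.inl j.succ) : ℕ)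
  set S : ℕ := ∑ j : Fin n, (x.symm (.inr (starEdgeEquiv n j)) : ℕ)
  have hcost : cost (starGraph n) x + (n * h + L) = 2 * S := by
    rw [cost_eq_sum, ← Equiv.sum_comp (starEdgeEquiv n), mul_sum]
    calc ∑ j, edgeCost _ x (starEdgeEquiv n j) + (n * h + L)
        = ∑ j, (edgeCost _ x (starEdgeEquiv n j) + (h + (x.symm (.inl j.succ) : ℕ))) := by
          simp only [L, sum_add_distrib, sum_const, card_univ, Fintype.card_fin, smul_eq_mul]
      _ = _ := sum_congr rfl fun j _ => hx.edgeCost_add rfl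
  have htotal : (h + L + S) * 2 + (n + 1 + n) = (n + 1 + n) * (n + 1 + n) := by
    have hsplit := sum_vertex_pos_add_sum_edge_pos x
    rw [Fin.sum_univ_succ, ← Equiv.sum_comp (starEdgeEquiv n)] at hsplit
    rw [hsplit, numElts_starGraph, sum_range_id_mul_two_add_self]
  have hvert : (n + 1) * (n + 1) ≤ (h + L) * 2 + (n + 1) := by
    have hlow := sum_range_card_le_sum_vertex_pos x
    rw [Fin.sum_univ_succ, Fintype.card_fin] at hlow
    rw [← sum_range_id_mul_two_add_self]
    omega
  have hhub : h ≤ n * h := by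
    rcases n.eq_zero_or_pos with rfl | hn
    · omega -- `htotal` forces `h = 0`
    · exact Nat.le_mul_of_pos_left h hn
  linarith

variable (n) in
noncomputable def starSeq : Fin (numElts (starGraph n)) ≃ Fin (n + 1) ⊕ (starGraph n).edgeSet :=
  (finCongr (numElts_starGraph n)).trans
    (finSumFinEquiv.symm.trans (Equiv.sumCongr (.refl _) (starEdgeEquiv n)))

lemma starSeq_symm_inl (v : Fin (n + 1)) : ((starSeq n).symm (.inl v) : ℕ) = v := by
  simp [starSeq]

lemma starSeq_symm_inr (j : Fin n) :
    ((starSeq n).symm (.inr (starEdgeEquiv n j)) : ℕ) = n + 1 + j := by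
  simp [starSeq]

lemma isCSeq_starSeq : IsCSeq (starGraph n) (starSeq n) := by
  refine isCSeq_of_forall_lt fun v e => ?_
  obtain ⟨j, rfl⟩ := (starEdgeEquiv n).surjective e
  rw [Fin.lt_def, starSeq_symm_inl, starSeq_symm_inr]
  omega

lemma two_cost_starSeq : 2 * cost (starGraph n) (starSeq n) = 5 * n ^ 2 + n := by
  have hedge (j : Fin n) : edgeCost _ (starSeq n) (starEdgeEquiv n j) = 2 * n + 1 + j := by
    have h := isCSeq_starSeq.edgeCost_add (e := starEdgeEquiv n j) rfl
    rw [starSeq_symm_inl, starSeq_symm_inl, starSeq_symm_inr, Fin.val_zero, Fin.val_succ] at h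
    omega
  have hgauss := sum_range_id_mul_two_add_self n
  rw [cost_eq_sum, ← Equiv.sum_comp (starEdgeEquiv n), sum_congr rfl fun j _ => hedge j,
    sum_add_distrib, sum_const, card_univ, Fintype.card_fin, smul_eq_mul,
    Fin.sum_univ_eq_sum_range (fun i => i)]
  linarith

end Star

theorem maxCost_star_general (n : ℕ) :
    2 * maxCost (starGraph n) = 5 * n ^ 2 + n := by
  have hmax : IsGreatest {c | ∃ x, IsCSeq (starGraph n) x ∧ cost (starGraph n) x = c}
      (cost (starGraph n) (starSeq n)) := by
    refine ⟨⟨_, isCSeq_starSeq, rfl⟩, ?_⟩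
    rintro _ ⟨x, hx, rfl⟩
    have := hx.two_cost_starGraph_le
    have := two_cost_starSeq (n := n)
    omega
  rw [maxCost, hmax.csSup_eq, two_cost_starSeq]

/-- `ν*(K_{1,n}) = (5n² + n)/2` for `n ≥ 2`. -/
theorem maxCost_star (n : ℕ) (hn : 2 ≤ n) :
    2 * maxCost (starGraph n) = 5 * n ^ 2 + n :=
  maxCost_star_general n

end ConsCost
end

section
/- The maximum construction cost of the path P_n with n vertices is ν*(P_n) = 2n² − 2n − 1 for all n ≥ 2. -/
namespace ConsCost

variable {V : Type*} [Fintype V]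

/-!
Since every interior vertex of `P_{m+2}` lies on two edges and each endpoint on one, summing the
edge costs of a construction sequence on `N = 2m + 3` positions gives
`ν(x) + N(N - 1) = 4 Σ_e x⁻¹(e) + x⁻¹(first) + x⁻¹(last)`.
The positions of the `m + 1` edges, and those of the edges together with the two endpoints, are
sets of distinct numbers below `N`, so their sums are at most the sums of the top `m + 1`
resp. `m + 3` positions. Both bounds are attained at once by listing the interior vertices, then
the two endpoints, then all edges.
-/

open Finset SimpleGraph

/-- The right-hand side is twice the sum of the `#s` largest elements of `range N`. -/
theorem two_mul_sum_add_le_of_subset_range {N : ℕ} {s : Finset ℕ} (hs : s ⊆ range N) :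
    2 * ∑ i ∈ s, i + #s * (#s + 1) ≤ 2 * #s * N := by
  induction N generalizing s with
  | zero => simp [subset_empty.1 hs]
  | succ N ih =>
    by_cases hN : N ∈ s
    · have := ih fun i hi => mem_range.2 <| lt_of_le_of_ne
        (mem_range_succ_iff.1 (hs (mem_of_mem_erase hi))) (ne_of_mem_erase hi)
      rw [← add_sum_erase s _ hN, ← card_erase_add_one hN]
      nlinarith
    · have := ih fun i hi => mem_range.2 <| lt_of_le_of_ne
        (mem_range_succ_iff.1 (hs hi)) fun h => hN (h ▸ hi)
      nlinarith

theorem two_mul_sum_add_le_of_injective {ι : Type*} [Fintype ι] {N : ℕ} {f : ι → Fin N}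
    (hf : Function.Injective f) :
    2 * ∑ i, (f i : ℕ) + Fintype.card ι * (Fintype.card ι + 1) ≤ 2 * Fintype.card ι * N := by
  have hinj : Function.Injective (fun i => (f i : ℕ)) := Fin.val_injective.comp hf
  have h := two_mul_sum_add_le_of_subset_range (s := univ.image fun i => (f i : ℕ)) (N := N)
    (fun k hk => by obtain ⟨i, -, rfl⟩ := mem_image.1 hk; exact mem_range.2 (f i).isLt)
  rwa [sum_image fun i _ j _ h => hinj h, card_image_of_injective _ hinj, card_univ] at h

theorem two_mul_sum_fin_val (N : ℕ) : 2 * ∑ k : Fin N, (k : ℕ) = N * (N - 1) := by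
  rw [Fin.sum_univ_eq_sum_range (fun k => k), mul_comm, sum_range_id_mul_two]

theorem IsCSeq.edgeCost_add_eq {G : SimpleGraph V} {x : Fin (numElts G) ≃ V ⊕ G.edgeSet}
    (hx : IsCSeq G x) {u w : V} (h : s(u, w) ∈ G.edgeSet) :
    edgeCost G x ⟨s(u, w), h⟩ + ((x.symm (.inl u) : ℕ) + x.symm (.inl w)) =
      2 * x.symm (.inr ⟨s(u, w), h⟩) := by
  have hu := hx ⟨s(u, w), h⟩ u (Sym2.mem_mk_left u w)
  have hw := hx ⟨s(u, w), h⟩ w (Sym2.mem_mk_right u w)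
  rw [Fin.lt_def] at hu hw
  rw [edgeCost, Sym2.lift_mk]
  dsimp only
  omega

section Path

def pathEdge {n : ℕ} (i : Fin n) : (pathGraph (n + 1)).edgeSet :=
  ⟨s(i.castSucc, i.succ), pathGraph_adj.2 (Or.inl rfl)⟩

theorem pathEdge_bijective (n : ℕ) : Function.Bijective (pathEdge (n := n)) := by
  constructor
  · intro i j hij
    have := congrArg Subtype.val hij
    simp only [pathEdge, Sym2.eq_iff, Fin.ext_iff, Fin.val_castSucc, Fin.val_succ] at this
    exact Fin.ext (by omega)
  · rintro ⟨e, he⟩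
    induction e using Sym2.inductionOn with
    | hf u v =>
      rcases (pathGraph_adj.1 he : (u : ℕ) + 1 = v ∨ (v : ℕ) + 1 = u) with h | h
      · refine ⟨⟨u, by omega⟩, Subtype.ext ?_⟩
        simp [pathEdge, h]
      · refine ⟨⟨v, by omega⟩, Subtype.ext ?_⟩
        simp [pathEdge, h, Sym2.eq_swap]

noncomputable def pathEdgeEquiv (n : ℕ) : Fin n ≃ (pathGraph (n + 1)).edgeSet :=
  .ofBijective _ (pathEdge_bijective n)

theorem numElts_pathGraph (n : ℕ) : numElts (pathGraph (n + 1)) = 2 * n + 1 := by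
  rw [numElts, Fintype.card_fin, ← Nat.card_congr (pathEdgeEquiv n), Nat.card_eq_fintype_card,
    Fintype.card_fin]
  omega

variable {n : ℕ} (x : Fin (numElts (pathGraph (n + 1))) ≃ Fin (n + 1) ⊕ (pathGraph (n + 1)).edgeSet)

theorem cost_pathGraph : cost (pathGraph (n + 1)) x = ∑ i, edgeCost _ x (pathEdge i) := by
  rw [cost, ← finsum_comp_equiv (pathEdgeEquiv n), finsum_eq_sum_of_fintype]
  rfl

theorem sum_position_pathGraph :
    ∑ v, (x.symm (.inl v) : ℕ) + ∑ i, (x.symm (.inr (pathEdge i)) : ℕ) =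
      ∑ k : Fin (numElts (pathGraph (n + 1))), (k : ℕ) := by
  rw [← Equiv.sum_comp (((Equiv.refl _).sumCongr (pathEdgeEquiv n)).trans x.symm),
    Fintype.sum_sum_type]
  rfl

theorem IsCSeq.cost_pathGraph_add (hx : IsCSeq _ x) :
    cost (pathGraph (n + 1)) x + (2 * n + 1) * (2 * n) =
      4 * ∑ i, (x.symm (.inr (pathEdge i)) : ℕ) + x.symm (.inl 0) + x.symm (.inl (Fin.last n)) := by
  have hV : 2 * ∑ v, (x.symm (.inl v) : ℕ) =
      ∑ i : Fin n, ((x.symm (.inl i.castSucc) : ℕ) + x.symm (.inl i.succ)) +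
        x.symm (.inl 0) + x.symm (.inl (Fin.last n)) := by
    rw [two_mul, sum_add_distrib]
    nth_rewrite 1 [Fin.sum_univ_castSucc]
    rw [Fin.sum_univ_succ]
    ring
  have hE : cost (pathGraph (n + 1)) x +
      ∑ i : Fin n, ((x.symm (.inl i.castSucc) : ℕ) + x.symm (.inl i.succ)) =
        2 * ∑ i, (x.symm (.inr (pathEdge i)) : ℕ) := by
    rw [cost_pathGraph, ← sum_add_distrib, mul_sum]
    exact sum_congr rfl fun i _ => hx.edgeCost_add_eq _
  have hT : 2 * ∑ k : Fin (numElts (pathGraph (n + 1))), (k : ℕ) = (2 * n + 1) * (2 * n) := by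
    rw [two_mul_sum_fin_val, numElts_pathGraph, Nat.add_sub_cancel]
  rw [← sum_position_pathGraph] at hT
  linarith

end Path

theorem IsCSeq.cost_pathGraph_le {m : ℕ}
    {x : Fin (numElts (pathGraph (m + 2))) ≃ Fin (m + 2) ⊕ (pathGraph (m + 2)).edgeSet}
    (hx : IsCSeq _ x) : cost (pathGraph (m + 2)) x ≤ 2 * m ^ 2 + 6 * m + 3 := by
  have hedge : Function.Injective fun i : Fin (m + 1) => Sum.inr (α := Fin (m + 2)) (pathEdge i) :=
    Sum.inr_injective.comp (pathEdge_bijective _).1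
  have hends : Function.Injective ![(0 : Fin (m + 2)), Fin.last (m + 1)] := by
    intro i j
    fin_cases i <;> fin_cases j <;> simp [Fin.ext_iff]
  have hE := two_mul_sum_add_le_of_injective (x.symm.injective.comp hedge)
  have hS := two_mul_sum_add_le_of_injective (x.symm.injective.comp
    (hedge.sumElim (Sum.inl_injective.comp hends) (by simp)))
  simp only [Function.comp_apply, Fintype.sum_sum_type, Sum.elim_inl, Sum.elim_inr,
    Fin.sum_univ_two, Matrix.cons_val_zero, Matrix.cons_val_one, Fintype.card_sum,
    Fintype.card_fin, numElts_pathGraph] at hE hS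
  have := hx.cost_pathGraph_add
  linarith

/-- All vertices first, in the order `1, …, n, 0`, then the edges in path order. -/
noncomputable def pathCSeq (n : ℕ) :
    Fin (numElts (pathGraph (n + 1))) ≃ Fin (n + 1) ⊕ (pathGraph (n + 1)).edgeSet :=
  (finCongr (show numElts (pathGraph (n + 1)) = (n + 1) + n by rw [numElts_pathGraph]; omega)).trans
    (finSumFinEquiv.symm.trans (Equiv.sumCongr (finRotate (n + 1)) (pathEdgeEquiv n)))

theorem pathCSeq_symm_inl (n : ℕ) (v : Fin (n + 1)) :
    ((pathCSeq n).symm (.inl v) : ℕ) = (finRotate (n + 1)).symm v := by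
  simp [pathCSeq]

theorem pathCSeq_symm_inr (n : ℕ) (i : Fin n) :
    ((pathCSeq n).symm (.inr (pathEdge i)) : ℕ) = n + 1 + i := by
  simp [pathCSeq, pathEdgeEquiv]

theorem isCSeq_pathCSeq (n : ℕ) : IsCSeq _ (pathCSeq n) := by
  intro e v _
  obtain ⟨i, rfl⟩ := (pathEdge_bijective n).2 e
  rw [Fin.lt_def, pathCSeq_symm_inl, pathCSeq_symm_inr]
  omega

theorem cost_pathCSeq (m : ℕ) : cost _ (pathCSeq (m + 1)) = 2 * m ^ 2 + 6 * m + 3 := by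
  have key := (isCSeq_pathCSeq (m + 1)).cost_pathGraph_add
  have h0 : (finRotate (m + 2)).symm 0 = Fin.last (m + 1) :=
    (finRotate _).symm_apply_eq.2 finRotate_last.symm
  have hlast : ((finRotate (m + 2)).symm (Fin.last (m + 1)) : ℕ) = m :=
    coe_finRotate_symm_of_ne_zero (Fin.last_pos.ne')
  have hsum := two_mul_sum_fin_val (m + 1)
  rw [Nat.add_sub_cancel] at hsum
  simp only [pathCSeq_symm_inl, pathCSeq_symm_inr, h0, hlast, Fin.val_last, sum_add_distrib,
    sum_const, card_univ, Fintype.card_fin, smul_eq_mul] at key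
  nlinarith

/-- `ν*(P_n) = 2n² − 2n − 1` for `n ≥ 2`, where `P_n` is the path with `n` vertices. -/
theorem maxCost_path (n : ℕ) (hn : 2 ≤ n) :
    maxCost (SimpleGraph.pathGraph n) = 2 * n ^ 2 - 2 * n - 1 := by
  obtain ⟨m, rfl⟩ : ∃ m, n = m + 2 := ⟨n - 2, by omega⟩
  have hformula : 2 * (m + 2) ^ 2 - 2 * (m + 2) - 1 = 2 * m ^ 2 + 6 * m + 3 := by
    ring_nf
    omega
  rw [hformula, maxCost]
  refine IsGreatest.csSup_eq ⟨⟨pathCSeq (m + 1), isCSeq_pathCSeq _, cost_pathCSeq m⟩, ?_⟩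
  rintro _ ⟨x, hx, rfl⟩
  exact hx.cost_pathGraph_le

end ConsCost
end

section
/- The maximum construction cost of the wheel W_n is ν*(W_n) = (13n² + n)/2 for all n ≥ 4. -/
/-!
Each edge `e = uw` contributes one dart `(u, e)` and one dart `(w, e)`, so the cost of a
construction sequence is `∑ₜ o(t)`, where `o(t)` counts the darts whose tail is placed at or
before step `t` and whose edge is placed after `t`. After step `t` at most `3n - t` edges remain,
so `o(t) ≤ 2(3n - t)`; and at most `t + 1` vertices have been placed, of degrees `n` (the hub) and
`3` (the rim), so `o(t) ≤ n + 3t`. Summing the smaller bound gives `2ν ≤ 13n² + n`. Placing the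
hub, then the rim, then the edges in any order attains it.
-/

namespace ConsCost

variable {V : Type*} [Fintype V]

/-- The wheel `W_n = C_n * K_1`: an `n`-cycle together with a hub vertex joined to
every cycle vertex. -/
def wheelGraph (n : ℕ) : SimpleGraph (Fin n ⊕ Unit) :=
  SimpleGraph.fromRel (fun a b =>
    (∃ i j : Fin n, a = Sum.inl i ∧ b = Sum.inl j ∧ (SimpleGraph.cycleGraph n).Adj i j) ∨
      a = Sum.inr ())

open SimpleGraph Finset

theorem sum_tsub_eq_sum_card_filter {ι : Type*} (s : Finset ι) (f g : ι → ℕ) {N : ℕ}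
    (hg : ∀ i ∈ s, g i ≤ N) :
    ∑ i ∈ s, (g i - f i) = ∑ t ∈ range N, #{i ∈ s | f i ≤ t ∧ t < g i} := by
  have h : ∀ i ∈ s, g i - f i = #{t ∈ range N | f i ≤ t ∧ t < g i} := by
    intro i hi
    rw [← Nat.card_Ico]
    congr 1
    ext t
    simp only [mem_Ico, mem_filter, mem_range]
    have := hg i hi
    omega
  rw [sum_congr rfl h]
  exact sum_card_bipartiteAbove_eq_sum_card_bipartiteBelow _

theorem sum_le_add_mul_card_sub_one {ι : Type*} (s : Finset ι) (f : ι → ℕ) (i₀ : ι) {k : ℕ}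
    (hf : ∀ i ≠ i₀, f i ≤ k) (hk : k ≤ f i₀) : ∑ i ∈ s, f i ≤ f i₀ + k * (#s - 1) := by
  classical
  by_cases hi₀ : i₀ ∈ s
  · rw [← add_sum_erase s f hi₀, ← card_erase_of_mem hi₀]
    refine Nat.add_le_add_left ?_ _
    simpa [mul_comm] using
      sum_le_card_nsmul _ _ k fun i hi => hf i (ne_of_mem_erase hi)
  · have hs : ∑ i ∈ s, f i ≤ #s * k := by
      simpa using sum_le_card_nsmul s f k fun i hi => hf i fun h => hi₀ (h ▸ hi)
    have hk' : #s * k ≤ k + k * (#s - 1) := by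
      cases #s with
      | zero => simp
      | succ m => rw [Nat.add_sub_cancel, Nat.succ_mul, mul_comm]; omega
    omega

theorem two_mul_sum_min_le (n : ℕ) :
    2 * ∑ t ∈ range (3 * n + 1), min (2 * (3 * n - t)) (n + 3 * t) ≤ 13 * n ^ 2 + n := by
  have hsplit : 3 * n + 1 = (n + 1) + 2 * n := by ring
  have hearly : (∑ t ∈ range (n + 1), (n + 3 * t)) * 2 = 2 * n * (n + 1) + 3 * (n + 1) * n := by
    rw [sum_add_distrib, sum_const, card_range, smul_eq_mul, ← mul_sum, add_mul,
      mul_assoc 3, sum_range_id_mul_two, Nat.add_sub_cancel]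
    ring
  have hlate : ∑ s ∈ range (2 * n), 2 * (3 * n - (n + 1 + s)) = 2 * n * (2 * n - 1) := by
    rw [← sum_range_reflect, ← sum_range_id_mul_two, sum_mul]
    refine sum_congr rfl fun s hs => ?_
    have := mem_range.1 hs
    omega
  calc 2 * ∑ t ∈ range (3 * n + 1), min (2 * (3 * n - t)) (n + 3 * t)
      ≤ 2 * (∑ t ∈ range (n + 1), (n + 3 * t) +
          ∑ s ∈ range (2 * n), 2 * (3 * n - (n + 1 + s))) := by
        rw [hsplit, sum_range_add]
        gcongr with t _ s _
        · exact min_le_right _ _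
        · exact min_le_left _ _
    _ = 13 * n ^ 2 + n := by
        rw [mul_add, mul_comm 2 (∑ t ∈ range (n + 1), _), hearly, hlate]
        rcases n with _ | n
        · simp
        · rw [show 2 * (n + 1) - 1 = 2 * n + 1 by omega]
          ring

section ConstructionSequence

variable {G : SimpleGraph V} (x : Fin (numElts G) ≃ V ⊕ G.edgeSet)

def vertexPos (v : V) : ℕ := x.symm (.inl v)

def edgePos (e : G.edgeSet) : ℕ := x.symm (.inr e)

def dartEdge (d : G.Dart) : G.edgeSet := ⟨d.edge, d.edge_mem⟩

theorem edgePos_lt_numElts (e : G.edgeSet) : edgePos x e < numElts G :=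
  (x.symm _).isLt

theorem vertexPos_injective : Function.Injective (vertexPos x) := fun _ _ h =>
  Sum.inl_injective (x.symm.injective (Fin.val_injective h))

theorem edgePos_injective : Function.Injective (edgePos x) := fun _ _ h =>
  Sum.inr_injective (x.symm.injective (Fin.val_injective h))

variable {x}

theorem IsCSeq.vertexPos_fst_lt (hx : IsCSeq G x) (d : G.Dart) :
    vertexPos x d.fst < edgePos x (dartEdge d) :=
  hx (dartEdge d) d.fst (Sym2.mem_mk_left _ _)

theorem IsCSeq.vertexPos_snd_lt (hx : IsCSeq G x) (d : G.Dart) :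
    vertexPos x d.snd < edgePos x (dartEdge d) :=
  hx (dartEdge d) d.snd (Sym2.mem_mk_right _ _)

theorem IsCSeq.edgeCost_dartEdge (hx : IsCSeq G x) (d : G.Dart) :
    edgeCost G x (dartEdge d) = (edgePos x (dartEdge d) - vertexPos x d.fst) +
      (edgePos x (dartEdge d) - vertexPos x d.snd) := by
  have h₁ := hx.vertexPos_fst_lt d
  have h₂ := hx.vertexPos_snd_lt d
  rw [edgeCost, show (dartEdge d : Sym2 V) = s(d.fst, d.snd) from rfl]
  simp only [Sym2.lift_mk]
  unfold edgePos vertexPos at *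
  omega

variable (x) in
theorem card_filter_vertexPos_le (t : ℕ) : #{v | vertexPos x v ≤ t} ≤ t + 1 := by
  rw [← card_range (t + 1)]
  refine card_le_card_of_injOn (vertexPos x) (fun v hv => ?_) (vertexPos_injective x).injOn
  simpa [Nat.lt_succ_iff] using (mem_filter.1 (mem_coe.1 hv)).2

variable [DecidableRel G.Adj]

theorem sum_dart_comp_dartEdge {M : Type*} [AddCommMonoid M] (f : G.edgeSet → M) :
    ∑ d : G.Dart, f (dartEdge d) = 2 • ∑ e, f e := by
  classical
  rw [← sum_fiberwise' univ dartEdge, smul_sum]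
  refine sum_congr rfl fun ⟨e, he⟩ _ => ?_
  rw [sum_const]
  congr 1
  rw [← G.dart_edge_fiber_card e he]
  congr 1
  ext d
  simp [dartEdge, Subtype.ext_iff]

theorem sum_dart_comp_fst {M : Type*} [AddCommMonoid M] (f : V → M) :
    ∑ d : G.Dart, f d.fst = ∑ v, G.degree v • f v := by
  classical
  rw [← sum_fiberwise' univ (fun d : G.Dart => d.fst)]
  refine sum_congr rfl fun v _ => ?_
  rw [sum_const, G.dart_fst_fiber_card_eq_degree]

theorem IsCSeq.cost_eq_sum_dart (hx : IsCSeq G x) :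
    cost G x = ∑ d : G.Dart, (edgePos x (dartEdge d) - vertexPos x d.fst) := by
  classical
  have hsymm : ∑ d : G.Dart, (edgePos x (dartEdge d) - vertexPos x d.snd) =
      ∑ d : G.Dart, (edgePos x (dartEdge d) - vertexPos x d.fst) :=
    Fintype.sum_equiv (Dart.symm_involutive.toPerm _) _ _ fun d => by
      simp [dartEdge, Dart.edge_symm]
  have h : 2 * cost G x = 2 * ∑ d : G.Dart, (edgePos x (dartEdge d) - vertexPos x d.fst) := by
    rw [cost, finsum_eq_sum_of_fintype, ← smul_eq_mul, ← sum_dart_comp_dartEdge]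
    simp only [hx.edgeCost_dartEdge, sum_add_distrib, hsymm, two_mul]
  omega

variable (x) in
def openDarts (t : ℕ) : Finset G.Dart :=
  {d | vertexPos x d.fst ≤ t ∧ t < edgePos x (dartEdge d)}

theorem IsCSeq.cost_eq_sum_card_openDarts (hx : IsCSeq G x) :
    cost G x = ∑ t ∈ range (numElts G), #(openDarts x t) := by
  rw [hx.cost_eq_sum_dart]
  exact sum_tsub_eq_sum_card_filter _ _ _ fun d _ => (edgePos_lt_numElts x _).le

variable (x) in
theorem card_openDarts_le_two_mul (t : ℕ) :
    #(openDarts x t) ≤ 2 * (numElts G - 1 - t) := by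
  classical
  have hlater : #{e : G.edgeSet | t < edgePos x e} ≤ numElts G - 1 - t := by
    rw [← Nat.card_Ioc]
    refine card_le_card_of_injOn (edgePos x) (fun e he => ?_) (edgePos_injective x).injOn
    have hte : t < edgePos x e := (mem_filter.1 (mem_coe.1 he)).2
    have := edgePos_lt_numElts x e
    simp only [coe_Ioc, Set.mem_Ioc]
    omega
  calc #(openDarts x t) ≤ #{d : G.Dart | t < edgePos x (dartEdge d)} :=
        card_le_card (monotone_filter_right _ fun _ _ hd => hd.2)
    _ = 2 * #{e : G.edgeSet | t < edgePos x e} := by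
        simp only [card_filter]
        exact sum_dart_comp_dartEdge (fun e => if t < edgePos x e then 1 else 0)
    _ ≤ 2 * (numElts G - 1 - t) := Nat.mul_le_mul_left 2 hlater

variable (x) in
theorem card_openDarts_le_sum_degree (t : ℕ) :
    #(openDarts x t) ≤ ∑ v with vertexPos x v ≤ t, G.degree v := by
  classical
  calc #(openDarts x t) ≤ #{d : G.Dart | vertexPos x d.fst ≤ t} :=
        card_le_card (monotone_filter_right _ fun _ _ hd => hd.1)
    _ = ∑ v with vertexPos x v ≤ t, G.degree v := by
        simp only [card_filter, sum_filter]
        rw [sum_dart_comp_fst (fun v => if vertexPos x v ≤ t then 1 else 0)]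
        simp [mul_ite]

theorem IsCSeq.cost_le_sum_min (hx : IsCSeq G x) :
    cost G x ≤ ∑ t ∈ range (numElts G),
      min (2 * (numElts G - 1 - t)) (∑ v with vertexPos x v ≤ t, G.degree v) := by
  rw [hx.cost_eq_sum_card_openDarts]
  exact sum_le_sum fun t _ =>
    le_min (card_openDarts_le_two_mul x t) (card_openDarts_le_sum_degree x t)

end ConstructionSequence

section VerticesFirst

variable {G : SimpleGraph V} (σ : V ≃ Fin (Fintype.card V))
  (τ : G.edgeSet ≃ Fin (Nat.card G.edgeSet))

noncomputable def verticesFirst : Fin (numElts G) ≃ V ⊕ G.edgeSet :=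
  ((Equiv.sumCongr σ τ).trans finSumFinEquiv).symm

@[simp]
theorem vertexPos_verticesFirst (v : V) : vertexPos (verticesFirst σ τ) v = σ v :=
  rfl

@[simp]
theorem edgePos_verticesFirst (e : G.edgeSet) :
    edgePos (verticesFirst σ τ) e = Fintype.card V + τ e :=
  rfl

theorem isCSeq_verticesFirst : IsCSeq G (verticesFirst σ τ) := by
  intro e v _
  rw [Fin.lt_def]
  change vertexPos _ v < edgePos _ e
  simp only [vertexPos_verticesFirst, edgePos_verticesFirst]
  have := (σ v).isLt
  omega

theorem cost_verticesFirst_add_sum [DecidableRel G.Adj] :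
    cost G (verticesFirst σ τ) + ∑ v, G.degree v * σ v =
      2 * ∑ k ∈ range (Nat.card G.edgeSet), (Fintype.card V + k) := by
  have hx := isCSeq_verticesFirst σ τ
  have hedges : ∑ e, edgePos (verticesFirst σ τ) e =
      ∑ k ∈ range (Nat.card G.edgeSet), (Fintype.card V + k) := by
    simp only [edgePos_verticesFirst]
    rw [Equiv.sum_comp τ (fun k => Fintype.card V + (k : ℕ)), Fin.sum_univ_eq_sum_range
      (fun k => Fintype.card V + k)]
  have hvertices : ∑ v, G.degree v * σ v = ∑ d : G.Dart, vertexPos (verticesFirst σ τ) d.fst := by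
    simp only [vertexPos_verticesFirst]
    rw [sum_dart_comp_fst (fun v => (σ v : ℕ))]
    rfl
  rw [hx.cost_eq_sum_dart, hvertices, ← sum_add_distrib, ← hedges, ← smul_eq_mul 2,
    ← sum_dart_comp_dartEdge]
  exact sum_congr rfl fun d _ => Nat.sub_add_cancel (hx.vertexPos_fst_lt d).le

end VerticesFirst

theorem maxCost_eq_cost {G : SimpleGraph V} {x : Fin (numElts G) ≃ V ⊕ G.edgeSet}
    (hx : IsCSeq G x) (hmax : ∀ y, IsCSeq G y → cost G y ≤ cost G x) : maxCost G = cost G x :=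
  IsGreatest.csSup_eq ⟨⟨x, hx, rfl⟩, by rintro _ ⟨y, hy, rfl⟩; exact hmax y hy⟩

section Wheel

variable {n : ℕ}

@[simp]
theorem wheelGraph_adj_inl_inl {i j : Fin n} :
    (wheelGraph n).Adj (.inl i) (.inl j) ↔ (cycleGraph n).Adj i j := by
  simp only [wheelGraph, fromRel_adj, ne_eq, Sum.inl.injEq, reduceCtorEq, or_false,
    exists_and_left, exists_eq_left']
  rw [(cycleGraph n).adj_comm j i, or_self, and_iff_right_of_imp Adj.ne]

@[simp]
theorem wheelGraph_adj_inr_inl (u : Unit) (i : Fin n) : (wheelGraph n).Adj (.inr u) (.inl i) :=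
  ⟨Sum.inr_ne_inl, .inl (.inr rfl)⟩


@[simp]
theorem wheelGraph_adj_inl_inr (i : Fin n) (u : Unit) : (wheelGraph n).Adj (.inl i) (.inr u) :=
  (wheelGraph_adj_inr_inl u i).symm

section Degree

variable [DecidableRel (wheelGraph n).Adj]

theorem wheelGraph_degree_inr (u : Unit) : (wheelGraph n).degree (.inr u) = n := by
  have : (wheelGraph n).neighborFinset (.inr u) = univ.map .inl := by
    ext (i | w) <;> simp
  rw [← card_neighborFinset_eq_degree, this, card_map, card_univ, Fintype.card_fin]

theorem wheelGraph_degree_inl (hn : 3 ≤ n) (i : Fin n) : (wheelGraph n).degree (.inl i) = 3 := by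
  have : (wheelGraph n).neighborFinset (.inl i) =
      insert (.inr ()) (((cycleGraph n).neighborFinset i).map .inl) := by
    ext (j | u) <;> simp
  obtain ⟨m, rfl⟩ : ∃ m, n = m + 3 := ⟨n - 3, by omega⟩
  rw [← card_neighborFinset_eq_degree, this, card_insert_of_notMem (by simp), card_map,
    card_neighborFinset_eq_degree, cycleGraph_degree_three_le]

end Degree

theorem card_edgeSet_wheelGraph (hn : 3 ≤ n) : Nat.card (wheelGraph n).edgeSet = 2 * n := by
  classical
  have h := (wheelGraph n).sum_degrees_eq_twice_card_edges
  simp only [Fintype.sum_sum_type, wheelGraph_degree_inl hn, wheelGraph_degree_inr, sum_const,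
    card_univ, Fintype.card_fin, Fintype.card_unit, smul_eq_mul] at h
  rw [Nat.card_eq_fintype_card, ← edgeFinset_card]
  omega

theorem numElts_wheelGraph (hn : 3 ≤ n) : numElts (wheelGraph n) = 3 * n + 1 := by
  rw [numElts, card_edgeSet_wheelGraph hn, Fintype.card_sum, Fintype.card_fin, Fintype.card_unit]
  ring

theorem sum_degree_wheelGraph_le [DecidableRel (wheelGraph n).Adj] (hn : 3 ≤ n)
    (s : Finset (Fin n ⊕ Unit)) : ∑ v ∈ s, (wheelGraph n).degree v ≤ n + 3 * (#s - 1) := by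
  have h := sum_le_add_mul_card_sub_one s (fun v => (wheelGraph n).degree v) (.inr ()) (k := 3)
    (by rintro (i | u) hv
        · exact (wheelGraph_degree_inl hn i).le
        · exact absurd rfl hv)
    (by rw [wheelGraph_degree_inr]; exact hn)
  rwa [wheelGraph_degree_inr] at h

theorem IsCSeq.two_mul_cost_wheelGraph_le (hn : 3 ≤ n)
    {x : Fin (numElts (wheelGraph n)) ≃ (Fin n ⊕ Unit) ⊕ (wheelGraph n).edgeSet}
    (hx : IsCSeq (wheelGraph n) x) : 2 * cost (wheelGraph n) x ≤ 13 * n ^ 2 + n := by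
  classical
  have hdeg (t : ℕ) : ∑ v with vertexPos x v ≤ t, (wheelGraph n).degree v ≤ n + 3 * t := by
    have := card_filter_vertexPos_le x t
    have := sum_degree_wheelGraph_le hn {v | vertexPos x v ≤ t}
    omega
  calc 2 * cost (wheelGraph n) x
      ≤ 2 * ∑ t ∈ range (3 * n + 1), min (2 * (3 * n - t)) (n + 3 * t) := by
        refine Nat.mul_le_mul_left 2 (hx.cost_le_sum_min.trans ?_)
        rw [numElts_wheelGraph hn, Nat.add_sub_cancel]
        exact sum_le_sum fun t _ => min_le_min le_rfl (hdeg t)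
    _ ≤ 13 * n ^ 2 + n := two_mul_sum_min_le n

theorem exists_isCSeq_two_mul_cost_wheelGraph (hn : 3 ≤ n) :
    ∃ x, IsCSeq (wheelGraph n) x ∧ 2 * cost (wheelGraph n) x = 13 * n ^ 2 + n := by
  classical
  let σ : Fin n ⊕ Unit ≃ Fin (Fintype.card (Fin n ⊕ Unit)) :=
    ((Equiv.optionEquivSumPUnit (Fin n)).symm.trans (finSuccEquiv n).symm).trans
      (finCongr (by simp))
  let τ := Finite.equivFin (wheelGraph n).edgeSet
  refine ⟨verticesFirst σ τ, isCSeq_verticesFirst σ τ, ?_⟩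
  have h := cost_verticesFirst_add_sum σ τ
  have hσ : ∑ v, (wheelGraph n).degree v * σ v = 3 * ∑ i ∈ range n, (i + 1) := by
    simp [Fintype.sum_sum_type, σ, wheelGraph_degree_inl hn, mul_sum,
      Fin.sum_univ_eq_sum_range (fun i => 3 * (i + 1)) n]
  rw [hσ, card_edgeSet_wheelGraph hn, Fintype.card_sum, Fintype.card_fin, Fintype.card_unit,
    sum_add_distrib, sum_add_distrib, sum_const, sum_const, card_range, card_range,
    smul_eq_mul, smul_eq_mul] at h
  have h₁ := sum_range_id_mul_two n
  have h₂ := sum_range_id_mul_two (2 * n)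
  obtain ⟨m, rfl⟩ : ∃ m, n = m + 3 := ⟨n - 3, by omega⟩
  rw [show m + 3 - 1 = m + 2 by omega] at h₁
  rw [show 2 * (m + 3) - 1 = 2 * m + 5 by omega] at h₂
  nlinarith

end Wheel

/-- `ν*(W_n) = (13n² + n)/2` for `n ≥ 4`. -/
theorem maxCost_wheel (n : ℕ) (hn : 4 ≤ n) :
    2 * maxCost (wheelGraph n) = 13 * n ^ 2 + n := by
  obtain ⟨x, hx, hcost⟩ := exists_isCSeq_two_mul_cost_wheelGraph (n := n) (by omega)
  have hmax : ∀ y, IsCSeq (wheelGraph n) y → cost (wheelGraph n) y ≤ cost (wheelGraph n) x :=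
    fun y hy => by
      have := hy.two_mul_cost_wheelGraph_le (by omega : 3 ≤ n)
      omega
  rw [maxCost_eq_cost hx hmax, hcost]

end ConsCost
end

section
/- The minimum construction cost of the path P_n with n vertices satisfies ν_*(P_n) ≤ 4n − 5 for all n ≥ 3. -/
/-!
List the path as `v₀, v₁, e₀, v₂, e₁, v₃, e₂, …`. Each edge `eᵢ = vᵢvᵢ₊₁` with `i ≥ 1` comes
right after `vᵢ₊₁` and three places after `vᵢ`, so it costs `4`; the edge `e₀` costs `3`.
The total is `4(n - 1) - 1 = 4n - 5`.
-/

namespace ConsCost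

variable {V : Type*} [Fintype V]

open SimpleGraph

theorem minCost_le_cost {G : SimpleGraph V} {x : Fin (numElts G) ≃ V ⊕ G.edgeSet}
    (hx : IsCSeq G x) : minCost G ≤ cost G x :=
  Nat.sInf_le ⟨x, hx, rfl⟩

namespace PathGraph

variable {n : ℕ}

def edge (n : ℕ) (i : Fin (n - 1)) : (pathGraph n).edgeSet :=
  ⟨s(⟨i, by omega⟩, ⟨i + 1, by omega⟩), by simp [pathGraph_adj]⟩

theorem edge_surjective : Function.Surjective (edge n) := by
  rintro ⟨e, he⟩
  induction e using Sym2.ind with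
  | _ u w =>
    obtain ⟨u, hu⟩ := u
    obtain ⟨w, hw⟩ := w
    obtain rfl | rfl : u + 1 = w ∨ w + 1 = u := pathGraph_adj.mp he
    · exact ⟨⟨u, by omega⟩, rfl⟩
    · exact ⟨⟨w, by omega⟩, Subtype.ext Sym2.eq_swap⟩

theorem edge_injective : Function.Injective (edge n) := by
  intro i j h
  simp only [edge, Subtype.mk.injEq, Sym2.eq_iff, Fin.mk.injEq] at h
  omega

noncomputable def edgeEquiv (n : ℕ) : Fin (n - 1) ≃ (pathGraph n).edgeSet :=
  Equiv.ofBijective (edge n) ⟨edge_injective, edge_surjective⟩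

theorem edgeEquiv_apply (i : Fin (n - 1)) : edgeEquiv n i = edge n i := rfl

theorem numElts_eq : numElts (pathGraph n) = 2 * n - 1 := by
  rw [numElts, ← Nat.card_congr (edgeEquiv n)]
  simp only [Fintype.card_fin, Nat.card_eq_fintype_card]
  omega

/-- Truncated subtraction puts `v₀` at position `0`. -/
def position (n : ℕ) : Fin n ⊕ Fin (n - 1) → Fin (2 * n - 1)
  | .inl v => ⟨2 * v - 1, by omega⟩
  | .inr i => ⟨2 * i + 2, by omega⟩

theorem position_bijective : Function.Bijective (position n) := by
  refine (Fintype.bijective_iff_injective_and_card _).mpr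
    ⟨?_, by simp only [Fintype.card_sum, Fintype.card_fin]; omega⟩
  rintro (a | a) (b | b) h <;> simp only [position, Fin.mk.injEq] at h
  · exact congrArg Sum.inl (Fin.ext (by omega))
  · omega
  · omega
  · exact congrArg Sum.inr (Fin.ext (by omega))

noncomputable def cSeq (n : ℕ) :
    Fin (numElts (pathGraph n)) ≃ Fin n ⊕ (pathGraph n).edgeSet :=
  (finCongr numElts_eq).trans <|
    (Equiv.ofBijective _ position_bijective).symm.trans <|
      Equiv.sumCongr (Equiv.refl _) (edgeEquiv n)

theorem cSeq_symm_inl (v : Fin n) : ((cSeq n).symm (.inl v) : ℕ) = 2 * v - 1 := by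
  simp [cSeq, Equiv.ofBijective_apply, position]

theorem cSeq_symm_edge (i : Fin (n - 1)) :
    ((cSeq n).symm (.inr (edge n i)) : ℕ) = 2 * i + 2 := by
  have : (edgeEquiv n).symm (edge n i) = i := (edgeEquiv n).symm_apply_apply i
  simp [cSeq, Equiv.ofBijective_apply, position, this]

theorem isCSeq_cSeq : IsCSeq (pathGraph n) (cSeq n) := by
  intro e v hv
  obtain ⟨i, rfl⟩ := edge_surjective e
  rw [Fin.lt_def, cSeq_symm_edge]
  rcases Sym2.mem_iff.mp hv with rfl | rfl <;> rw [cSeq_symm_inl] <;> simp only <;> omega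

theorem edgeCost_cSeq (i : Fin (n - 1)) :
    edgeCost (pathGraph n) (cSeq n) (edge n i) = 4 - if (i : ℕ) = 0 then 1 else 0 := by
  rw [edgeCost, cSeq_symm_edge]
  simp only [edge, Sym2.lift_mk, cSeq_symm_inl]
  split_ifs <;> omega

theorem sum_range_four_sub (m : ℕ) :
    ∑ i ∈ Finset.range m, (4 - if i = 0 then 1 else 0) = 4 * m - 1 := by
  induction m with
  | zero => rfl
  | succ m ih => rw [Finset.sum_range_succ, ih]; split_ifs <;> omega

theorem cost_cSeq : cost (pathGraph n) (cSeq n) = 4 * n - 5 := by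
  rw [cost, ← finsum_comp_equiv (edgeEquiv n), finsum_eq_sum_of_fintype]
  simp only [edgeEquiv_apply, edgeCost_cSeq]
  rw [Fin.sum_univ_eq_sum_range (fun i => 4 - if i = 0 then 1 else 0), sum_range_four_sub]
  omega

end PathGraph

theorem minCost_path_le_general (n : ℕ) :
    minCost (SimpleGraph.pathGraph n) ≤ 4 * n - 5 :=
  PathGraph.cost_cSeq (n := n) ▸ minCost_le_cost PathGraph.isCSeq_cSeq

/-- `ν_*(P_n) ≤ 4n − 5` for `n ≥ 3`, where `P_n` is the path with `n` vertices. -/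
theorem minCost_path_le (n : ℕ) (hn : 3 ≤ n) :
    minCost (SimpleGraph.pathGraph n) ≤ 4 * n - 5 :=
  minCost_path_le_general n

end ConsCost
end
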